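/- arXiv:2111.15120 — 7 statements merged into one kernel-verified Lean document; each statement's English description precedes it below -/
import Mathlib

section
/- Let μ_m and μ be probability measures on a metric space S with μ_m → μ weakly, and let g_m, g : S → ℝ be uniformly bounded measurable functions such that g_m converges continuously to g (i.e., g_m(s_m) → g(s) whenever s_m → s) with g continuous. Then ∫ g_m dμ_m → ∫ g dμ. -/
open MeasureTheory Filter Topology

/-! Continuous convergence to a continuous limit is locally uniform convergence (in a first
countable space a sequence `(m_j, t_j)` with `m_j → ∞`, `t_j → s` can be refined so that
`m_j` is strictly increasing and then filled in to a sequence converging to `s`). Hence, for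
`ε > 0`, the closed sets `G_k = closure {x | ∃ m ≥ k, ε ≤ |g_m x - g x|}` decrease to `∅`, so
`μ G_k` is small for some `k`, and by the portmanteau theorem so is `μ_m G_k` for large `m`.
Off `G_k` we have `|g_m - g| < ε`, which bounds `∫ (g_m - g) dμ_m`; the remaining term
`∫ g dμ_m → ∫ g dμ` is weak convergence. -/

section ContinuousConvergence

variable {X Y : Type*} [TopologicalSpace X]

theorem tendsto_extend_of_strictMono {φ : ℕ → ℕ} (hφ : StrictMono φ) {t : ℕ → X} {x : X}
    (ht : Tendsto t atTop (𝓝 x)) : Tendsto (Function.extend φ t fun _ => x) atTop (𝓝 x) := by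
  intro U hU
  obtain ⟨J, hJ⟩ := eventually_atTop.1 (ht hU)
  refine mem_atTop_sets.2 ⟨φ J, fun i hi => ?_⟩
  by_cases hi_range : ∃ j, φ j = i
  · obtain ⟨j, rfl⟩ := hi_range
    rw [Set.mem_preimage, hφ.injective.extend_apply]
    exact hJ j (hφ.le_iff_le.1 hi)
  · rw [Set.mem_preimage, Function.extend_apply' _ _ _ hi_range]
    exact mem_of_mem_nhds hU

section

variable [TopologicalSpace Y] {F : ℕ → X → Y}

theorem tendsto_comp_strictMono_of_seq {x : X} {y : Y}
    (hF : ∀ u : ℕ → X, Tendsto u atTop (𝓝 x) → Tendsto (fun m => F m (u m)) atTop (𝓝 y))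
    {φ : ℕ → ℕ} (hφ : StrictMono φ) {t : ℕ → X} (ht : Tendsto t atTop (𝓝 x)) :
    Tendsto (fun j => F (φ j) (t j)) atTop (𝓝 y) := by
  simpa [Function.comp_def, hφ.injective.extend_apply] using
    (hF _ (tendsto_extend_of_strictMono hφ ht)).comp hφ.tendsto_atTop

theorem tendsto_uncurry_of_seq [FirstCountableTopology X] {x : X} {y : Y}
    (hF : ∀ u : ℕ → X, Tendsto u atTop (𝓝 x) → Tendsto (fun m => F m (u m)) atTop (𝓝 y)) :
    Tendsto (fun p : ℕ × X => F p.1 p.2) (atTop ×ˢ 𝓝 x) (𝓝 y) := by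
  refine tendsto_of_subseq_tendsto fun ns hns => ?_
  obtain ⟨ms, hms⟩ := strictMono_subseq_of_tendsto_atTop (tendsto_fst.comp hns)
  exact ⟨ms, tendsto_comp_strictMono_of_seq hF hms.2
    ((tendsto_snd.comp hns).comp hms.1.tendsto_atTop)⟩

end

theorem tendstoLocallyUniformly_of_seq [FirstCountableTopology X] [UniformSpace Y]
    {F : ℕ → X → Y} {f : X → Y} (hf : Continuous f)
    (hF : ∀ (u : ℕ → X) (x : X), Tendsto u atTop (𝓝 x) →
      Tendsto (fun m => F m (u m)) atTop (𝓝 (f x))) :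
    TendstoLocallyUniformly F f atTop :=
  tendstoLocallyUniformly_iff_forall_tendsto.2 fun x =>
    (((hf.tendsto x).comp tendsto_snd).prodMk_nhds (tendsto_uncurry_of_seq (hF · x))).mono_right
      (nhds_le_uniformity (f x))

end ContinuousConvergence

section LocallyUniformToZero

variable {X E : Type*} [NormedAddCommGroup E]

theorem iInter_closure_norm_ge_eq_empty [TopologicalSpace X] {f : ℕ → X → E}
    (hf : TendstoLocallyUniformly f 0 atTop) {ε : ℝ} (hε : 0 < ε) :
    ⋂ k, closure {x | ∃ m ≥ k, ε ≤ ‖f m x‖} = ∅ := by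
  refine Set.eq_empty_iff_forall_notMem.2 fun x hx => ?_
  obtain ⟨t, ht, hft⟩ := Metric.tendstoLocallyUniformly_iff.1 hf ε hε x
  obtain ⟨k, hk⟩ := eventually_atTop.1 hft
  obtain ⟨y, hyt, m, hkm, hεy⟩ := mem_closure_iff_nhds.1 (Set.mem_iInter.1 hx k) t ht
  have hy_small := hk m hkm y hyt
  rw [Pi.zero_apply, dist_zero_left] at hy_small
  exact hεy.not_gt hy_small

theorem norm_integral_le_of_norm_le_off [NormedSpace ℝ E] [MeasurableSpace X]
    {μ : Measure X} [IsProbabilityMeasure μ] {f : X → E} {G : Set X} (hG : MeasurableSet G)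
    {C ε : ℝ} (hC : ∀ x, ‖f x‖ ≤ C) (hε : 0 ≤ ε) (hfε : ∀ x ∉ G, ‖f x‖ ≤ ε) :
    ‖∫ x, f x ∂μ‖ ≤ C * μ.real G + ε := by
  have hbound : ∀ x, ‖f x‖ ≤ G.indicator (fun _ => C) x + ε := by
    intro x
    by_cases hx : x ∈ G
    · simpa [hx] using (hC x).trans (le_add_of_nonneg_right hε)
    · simpa [hx] using hfε x hx
  calc ‖∫ x, f x ∂μ‖ ≤ ∫ x, (G.indicator (fun _ => C) x + ε) ∂μ :=
        norm_integral_le_of_norm_le (((integrable_const C).indicator hG).add (integrable_const ε))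
          (ae_of_all _ hbound)
    _ = C * μ.real G + ε := by
        rw [integral_add ((integrable_const C).indicator hG) (integrable_const ε),
          integral_indicator_const C hG, integral_const, probReal_univ, smul_eq_mul,
          smul_eq_mul, mul_comm, one_mul]

theorem tendsto_integral_of_tendstoLocallyUniformly_zero [NormedSpace ℝ E] [TopologicalSpace X]
    [MeasurableSpace X] [OpensMeasurableSpace X] [HasOuterApproxClosed X]
    {ν : ProbabilityMeasure X} {νs : ℕ → ProbabilityMeasure X} (hν : Tendsto νs atTop (𝓝 ν))
    {f : ℕ → X → E} {C : ℝ} (hC : ∀ m x, ‖f m x‖ ≤ C)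
    (hf : TendstoLocallyUniformly f 0 atTop) :
    Tendsto (fun m => ∫ x, f m x ∂(νs m : Measure X)) atTop (𝓝 0) := by
  refine NormedAddGroup.tendsto_nhds_zero.2 fun ε hε => ?_
  obtain ⟨δ, hδ, hCδ⟩ := exists_pos_mul_lt (half_pos hε) (max C 0)
  set G : ℕ → Set X := fun k => closure {x | ∃ m ≥ k, ε / 2 ≤ ‖f m x‖}
  have hG_closed (k : ℕ) : IsClosed (G k) := isClosed_closure
  have hG_anti : Antitone G := fun k l hkl =>
    closure_mono fun x ⟨m, hlm, hx⟩ => ⟨m, hkl.trans hlm, hx⟩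
  have hG_null : Tendsto (fun k => (ν : Measure X) (G k)) atTop (𝓝 0) := by
    simpa [G, Function.comp_def, iInter_closure_norm_ge_eq_empty hf (half_pos hε)] using
      tendsto_measure_iInter_atTop (fun k => (hG_closed k).measurableSet.nullMeasurableSet)
        hG_anti ⟨0, measure_ne_top _ _⟩
  obtain ⟨k, hk⟩ := (hG_null.eventually_lt_const (ENNReal.ofReal_pos.2 hδ)).exists
  have hG_small : ∀ᶠ m in atTop, (νs m : Measure X) (G k) < ENNReal.ofReal δ :=
    eventually_lt_of_limsup_lt
      ((ProbabilityMeasure.limsup_measure_closed_le_of_tendsto hν (hG_closed k)).trans_lt hk)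
  filter_upwards [eventually_ge_atTop k, hG_small] with m hkm hm
  have hf_off (x : X) (hx : x ∉ G k) : ‖f m x‖ ≤ ε / 2 :=
    not_lt.1 fun h => hx (subset_closure ⟨m, hkm, h.le⟩)
  have hGm : (νs m : Measure X).real (G k) < δ := ENNReal.toReal_lt_of_lt_ofReal hm
  calc ‖∫ x, f m x ∂(νs m : Measure X)‖
      ≤ max C 0 * (νs m : Measure X).real (G k) + ε / 2 :=
        norm_integral_le_of_norm_le_off (hG_closed k).measurableSet
          (fun x => (hC m x).trans (le_max_left C 0)) (half_pos hε).le hf_off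
    _ < ε := by
        nlinarith [le_max_right C 0, measureReal_nonneg (μ := (νs m : Measure X)) (s := G k)]

end LocallyUniformToZero

/-- Generalized dominated convergence (Serfozo/Langen): if `μ_m → μ` weakly
on a metric space `S`, the measurable functions `g_m` are uniformly bounded and converge
continuously to a continuous `g` (i.e. `g_m (s_m) → g s` whenever `s_m → s`), then
`∫ g_m dμ_m → ∫ g dμ`. -/
theorem generalized_dominated_convergence
    {S : Type*} [MetricSpace S] [MeasurableSpace S] [BorelSpace S]
    (μ : Measure S) (μseq : ℕ → Measure S)
    [IsProbabilityMeasure μ] [∀ m, IsProbabilityMeasure (μseq m)]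
    (hweak : ∀ f : BoundedContinuousFunction S ℝ,
      Tendsto (fun m => ∫ s, f s ∂(μseq m)) atTop (𝓝 (∫ s, f s ∂μ)))
    (g : S → ℝ) (gseq : ℕ → S → ℝ) (M : ℝ)
    (hg_meas : ∀ m, Measurable (gseq m)) (hg_cont : Continuous g)
    (hbound : ∀ m s, |gseq m s| ≤ M)
    (hcc : ∀ (s : ℕ → S) (s₀ : S), Tendsto s atTop (𝓝 s₀) →
      Tendsto (fun m => gseq m (s m)) atTop (𝓝 (g s₀))) :
    Tendsto (fun m => ∫ s, gseq m s ∂(μseq m)) atTop (𝓝 (∫ s, g s ∂μ)) := by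
  have hg_bound (s : S) : |g s| ≤ M :=
    le_of_tendsto (hcc (fun _ => s) s tendsto_const_nhds).abs (Eventually.of_forall (hbound · s))
  have hg_bcf : Tendsto (fun m => ∫ s, g s ∂(μseq m)) atTop (𝓝 (∫ s, g s ∂μ)) := by
    simpa using hweak (BoundedContinuousFunction.ofNormedAddCommGroup g hg_cont M hg_bound)
  have hν : Tendsto (β := ProbabilityMeasure S) (fun m => ⟨μseq m, inferInstance⟩) atTop
      (𝓝 ⟨μ, inferInstance⟩) :=
    ProbabilityMeasure.tendsto_iff_forall_integral_tendsto.2 hweak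
  have hdiff_unif : TendstoLocallyUniformly (fun m s => gseq m s - g s) 0 atTop := by
    simpa [Pi.zero_def] using (tendstoLocallyUniformly_of_seq hg_cont hcc).fun_sub
      (tendstoLocallyUniformly_of_seq hg_cont fun _ x hu => (hg_cont.tendsto x).comp hu)
  have hdiff : Tendsto (fun m => ∫ s, (gseq m s - g s) ∂(μseq m)) atTop (𝓝 0) :=
    tendsto_integral_of_tendstoLocallyUniformly_zero hν
      (fun m s => (abs_sub _ _).trans (add_le_add (hbound m s) (hg_bound s))) hdiff_unif
  have hint_seq (m : ℕ) : Integrable (gseq m) (μseq m) :=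
    (integrable_const M).mono' (hg_meas m).aestronglyMeasurable (ae_of_all _ (hbound m))
  have hint (m : ℕ) : Integrable g (μseq m) :=
    (integrable_const M).mono' hg_cont.aestronglyMeasurable (ae_of_all _ hg_bound)
  simpa [integral_sub (hint_seq _) (hint _)] using hdiff.add hg_bcf
end

section
/- Let p be a stochastic kernel from a metric space W to a Polish space Y that is weakly continuous (w_m → w implies p(·|w_m) → p(·|w) weakly), and let G_m : Y × W → ℝ be a uniformly bounded sequence converging continuously to a continuous bounded G : Y × W → ℝ. Then the functions H_m(w) := ∫ G_m(y, w) p(dy|w) are uniformly bounded and converge continuously to H(w) := ∫ G(y, w) p(dy|w). -/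
open MeasureTheory ProbabilityTheory Filter Topology
open scoped ENNReal BoundedContinuousFunction

/-!
Since `G` is continuous, continuous convergence of `G_m(·, w_m)` to `G(·, w)` is locally uniform
convergence. So the interiors of the sets where `|G_m(·, w_m) - G(·, w)| < ε` for all `m ≥ N`
exhaust `Y`, and one of them, `U`, carries all but `ε` of the mass of `p(·|w)`. By the portmanteau
theorem the closed set `Uᶜ` eventually has `p(·|w_m)`-mass below `ε` too. On `U` the two integrands
are `ε`-close and off `U` they differ by at most `2M`, while
`∫ G(y, w) p(dy|w_m) → ∫ G(y, w) p(dy|w)` by the weak continuity of `p`.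
-/

theorem tendsto_uncurry_atTop_prod_nhds_of_seq {X β : Type*} [TopologicalSpace X]
    [FirstCountableTopology X] [TopologicalSpace β] {F : ℕ → X → β} {x : X} {b : β}
    (h : ∀ u : ℕ → X, Tendsto u atTop (𝓝 x) → Tendsto (fun n => F n (u n)) atTop (𝓝 b)) :
    Tendsto (Function.uncurry F) (atTop ×ˢ 𝓝 x) (𝓝 b) := by
  obtain ⟨s, hs⟩ := (𝓝 x).exists_antitone_basis
  rw [(atTop_basis.prod hs.toHasBasis).tendsto_left_iff]
  by_contra! ⟨V, hV, hescape⟩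
  have hfreq : ∀ k, ∃ᶠ n in atTop, ∃ y ∈ s k, F n y ∉ V := fun k =>
    frequently_atTop.2 fun N => by
      simpa [Set.MapsTo] using hescape (N, k) ⟨trivial, trivial⟩
  obtain ⟨φ, hφ, hφs⟩ := extraction_forall_of_frequently hfreq
  choose y hys hyV using hφs
  -- Fill the gaps of the subsequence `y` with `x` to get a sequence to which `h` applies.
  have hu : Tendsto (Function.extend φ y fun _ => x) atTop (𝓝 x) :=
    hs.tendsto_right_iff.2 fun k _ => by
      filter_upwards [eventually_ge_atTop (φ k)] with n hn
      by_cases hrange : ∃ j, φ j = n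
      · obtain ⟨j, rfl⟩ := hrange
        rw [hφ.injective.extend_apply]
        exact hs.antitone (hφ.le_iff_le.1 hn) (hys j)
      · rw [Function.extend_apply' _ _ _ hrange]
        exact mem_of_mem_nhds (hs.mem k)
  obtain ⟨k, hk⟩ := (((h _ hu).comp hφ.tendsto_atTop).eventually hV).exists
  exact hyV k (by rwa [Function.comp_apply, hφ.injective.extend_apply] at hk)

theorem tendstoLocallyUniformly_of_forall_tendsto_seq {X β : Type*} [TopologicalSpace X]
    [FirstCountableTopology X] [UniformSpace β] {F : ℕ → X → β} {f : X → β} (hf : Continuous f)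
    (h : ∀ x (u : ℕ → X), Tendsto u atTop (𝓝 x) →
      Tendsto (fun n => F n (u n)) atTop (𝓝 (f x))) :
    TendstoLocallyUniformly F f atTop :=
  tendstoLocallyUniformly_iff_forall_tendsto.2 fun x =>
    (((hf.tendsto x).comp tendsto_snd).prodMk_nhds
      (tendsto_uncurry_atTop_prod_nhds_of_seq (h x))).mono_right (nhds_le_uniformity (f x))

theorem TendstoLocallyUniformly.exists_isOpen_measure_compl_lt {X β : Type*}
    [TopologicalSpace X] [MeasurableSpace X] [OpensMeasurableSpace X] [PseudoMetricSpace β]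
    {F : ℕ → X → β} {f : X → β} (h : TendstoLocallyUniformly F f atTop) (μ : Measure X)
    [IsFiniteMeasure μ] {ε : ℝ} (hε : 0 < ε) {δ : ℝ≥0∞} (hδ : 0 < δ) :
    ∃ U, IsOpen U ∧ μ Uᶜ < δ ∧ ∃ N, ∀ n ≥ N, ∀ y ∈ U, dist (f y) (F n y) < ε := by
  set U : ℕ → Set X := fun N => interior {y | ∀ n ≥ N, dist (f y) (F n y) < ε}
  have hU_mono : Monotone U := fun N N' hNN' =>
    interior_mono fun y hy n hn => hy n (hNN'.trans hn)
  have hU_cover : ⋂ N, (U N)ᶜ = ∅ := by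
    refine Set.iInter_eq_empty_iff.2 fun y => ?_
    obtain ⟨t, ht, hev⟩ := Metric.tendstoLocallyUniformly_iff.1 h ε hε y
    obtain ⟨N, hN⟩ := eventually_atTop.1 hev
    exact ⟨N, not_not.2 (mem_interior_iff_mem_nhds.2
      (mem_of_superset ht fun y' hy' n hn => hN n hn y' hy'))⟩
  have hlim := tendsto_measure_iInter_atTop (μ := μ)
    (fun N => isOpen_interior.isClosed_compl.measurableSet.nullMeasurableSet)
    (fun N N' hNN' => Set.compl_subset_compl.2 (hU_mono hNN')) ⟨0, measure_ne_top μ (U 0)ᶜ⟩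
  rw [hU_cover, measure_empty] at hlim
  obtain ⟨N, hN⟩ := (hlim.eventually_lt_const hδ).exists
  exact ⟨U N, isOpen_interior, hN, N, fun n hn y hy => interior_subset hy n hn⟩

theorem abs_integral_le_of_abs_le_on {X : Type*} [MeasurableSpace X] (μ : Measure X)
    [IsFiniteMeasure μ] {g : X → ℝ} (hg_meas : AEStronglyMeasurable g μ) {U : Set X}
    (hU : MeasurableSet U) {ε C : ℝ} (hgU : ∀ y ∈ U, |g y| ≤ ε) (hg : ∀ y, |g y| ≤ C) :
    |∫ y, g y ∂μ| ≤ ε * μ.real U + C * μ.real Uᶜ := by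
  have hg_int : Integrable g μ := (integrable_const C).mono' hg_meas (ae_of_all _ hg)
  rw [← integral_add_compl hU hg_int]
  refine (abs_add_le _ _).trans (add_le_add ?_ ?_)
  · exact norm_setIntegral_le_of_norm_le_const (measure_lt_top _ _) fun y hy =>
      (Real.norm_eq_abs _).trans_le (hgU y hy)
  · exact norm_setIntegral_le_of_norm_le_const (measure_lt_top _ _) fun y _ =>
      (Real.norm_eq_abs _).trans_le (hg y)

theorem tendsto_integral_of_tendstoLocallyUniformly {Y : Type*} [TopologicalSpace Y]
    [MeasurableSpace Y] [OpensMeasurableSpace Y] [HasOuterApproxClosed Y]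
    {μs : ℕ → ProbabilityMeasure Y} {μ : ProbabilityMeasure Y} (hμ : Tendsto μs atTop (𝓝 μ))
    {F : ℕ → Y → ℝ} {f : Y →ᵇ ℝ} {C : ℝ} (hF_meas : ∀ n, AEStronglyMeasurable (F n) (μs n))
    (hF_bdd : ∀ n y, |F n y - f y| ≤ C) (hF : TendstoLocallyUniformly F f atTop) :
    Tendsto (fun n => ∫ y, F n y ∂(μs n)) atTop (𝓝 (∫ y, f y ∂μ)) := by
  have hg_meas n : AEStronglyMeasurable (fun y => F n y - f y) (μs n) :=
    (hF_meas n).sub f.continuous.aestronglyMeasurable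
  have hsplit n : ∫ y, F n y ∂(μs n) = ∫ y, (F n y - f y) ∂(μs n) + ∫ y, f y ∂(μs n) := by
    rw [← integral_add ((integrable_const C).mono' (hg_meas n) (ae_of_all _ (hF_bdd n)))
      (f.integrable _)]
    simp
  suffices Tendsto (fun n => ∫ y, (F n y - f y) ∂(μs n)) atTop (𝓝 0) by
    simpa only [hsplit, zero_add] using
      this.add (ProbabilityMeasure.tendsto_iff_forall_integral_tendsto.1 hμ f)
  rw [Metric.tendsto_nhds]
  intro ε hε
  have hC : 0 ≤ C := by
    obtain ⟨y⟩ := nonempty_of_isProbabilityMeasure (μ : Measure Y)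
    exact (abs_nonneg _).trans (hF_bdd 0 y)
  set δ := ε / (2 * (C + 1)) with hδ_def
  have hδ : 0 < δ := by positivity
  obtain ⟨U, hU_open, hμU, N, hN⟩ :=
    hF.exists_isOpen_measure_compl_lt μ (half_pos hε) (ENNReal.ofReal_pos.2 hδ)
  have hsmall : ∀ᶠ n in atTop, (μs n : Measure Y) Uᶜ < ENNReal.ofReal δ :=
    eventually_lt_of_limsup_lt
      ((ProbabilityMeasure.limsup_measure_closed_le_of_tendsto hμ hU_open.isClosed_compl).trans_lt
        hμU)
  filter_upwards [hsmall, eventually_ge_atTop N] with n hn_small hn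
  rw [Real.dist_eq, sub_zero]
  calc |∫ y, (F n y - f y) ∂(μs n)|
      ≤ ε / 2 * (μs n : Measure Y).real U + C * (μs n : Measure Y).real Uᶜ :=
        abs_integral_le_of_abs_le_on _ (hg_meas n) hU_open.measurableSet
          (fun y hy => by simpa [Real.dist_eq, abs_sub_comm] using (hN n hn y hy).le) (hF_bdd n)
    _ ≤ ε / 2 * 1 + C * δ := by
        gcongr
        · exact measureReal_le_one
        · exact ENNReal.toReal_le_of_le_ofReal hδ.le hn_small.le
    _ < ε := by
        rw [hδ_def]
        field_simp
        nlinarith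

theorem kernel_preserves_continuous_convergence_general
    {W : Type*} [MetricSpace W] [MeasurableSpace W]
    {Y : Type*} [MetricSpace Y] [MeasurableSpace Y] [BorelSpace Y]
    (p : Kernel W Y) [IsMarkovKernel p]
    (hp_weak : ∀ (wseq : ℕ → W) (w : W), Tendsto wseq atTop (𝓝 w) →
      ∀ f : BoundedContinuousFunction Y ℝ,
        Tendsto (fun m => ∫ y, f y ∂(p (wseq m))) atTop (𝓝 (∫ y, f y ∂(p w))))
    (G : Y × W → ℝ) (Gseq : ℕ → Y × W → ℝ) (M : ℝ)
    (hG_meas : ∀ m, Measurable (Gseq m))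
    (hG_bdd : ∀ m q, |Gseq m q| ≤ M)
    (hG_cont : Continuous G) (hG_cbdd : ∀ q, |G q| ≤ M)
    (hcc : ∀ (yseq : ℕ → Y) (wseq : ℕ → W) (y : Y) (w : W),
      Tendsto yseq atTop (𝓝 y) → Tendsto wseq atTop (𝓝 w) →
      Tendsto (fun m => Gseq m (yseq m, wseq m)) atTop (𝓝 (G (y, w)))) :
    (∀ (m : ℕ) (w : W), |∫ y, Gseq m (y, w) ∂(p w)| ≤ M) ∧
    (∀ (wseq : ℕ → W) (w : W), Tendsto wseq atTop (𝓝 w) →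
      Tendsto (fun m => ∫ y, Gseq m (y, wseq m) ∂(p (wseq m))) atTop
        (𝓝 (∫ y, G (y, w) ∂(p w)))) := by
  refine ⟨fun m w => ?_, fun wseq w hw => ?_⟩
  · simpa using norm_integral_le_of_norm_le_const (μ := p w)
      (ae_of_all _ fun y => (Real.norm_eq_abs _).trans_le (hG_bdd m (y, w)))
  let f : Y →ᵇ ℝ := .ofNormedAddCommGroup (fun y => G (y, w)) (by fun_prop) M
    fun y => (Real.norm_eq_abs _).trans_le (hG_cbdd (y, w))
  let μs : ℕ → ProbabilityMeasure Y := fun m => ⟨p (wseq m), inferInstance⟩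
  let μ : ProbabilityMeasure Y := ⟨p w, inferInstance⟩
  have hp_tendsto : Tendsto μs atTop (𝓝 μ) :=
    ProbabilityMeasure.tendsto_iff_forall_integral_tendsto.2 (hp_weak wseq w hw)
  refine tendsto_integral_of_tendstoLocallyUniformly (f := f) (C := 2 * M) hp_tendsto
    (fun m => (hG_meas m).comp (measurable_id.prodMk measurable_const) |>.aestronglyMeasurable)
    (fun m y => ?_)
    (tendstoLocallyUniformly_of_forall_tendsto_seq f.continuous fun y u hu => hcc u wseq y w hu hw)
  calc |Gseq m (y, wseq m) - G (y, w)| ≤ |Gseq m (y, wseq m)| + |G (y, w)| := abs_sub _ _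
    _ ≤ 2 * M := by linarith [hG_bdd m (y, wseq m), hG_cbdd (y, w)]

/-- Integrating a uniformly bounded, continuously convergent sequence `G_m`
against a weakly continuous stochastic kernel `p` produces a uniformly bounded, continuously
convergent sequence `H_m (w) := ∫ G_m (y, w) p(dy|w)`. -/
theorem kernel_preserves_continuous_convergence
    {W : Type*} [MetricSpace W] [MeasurableSpace W] [BorelSpace W]
    {Y : Type*} [MetricSpace Y] [PolishSpace Y] [MeasurableSpace Y] [BorelSpace Y]
    (p : Kernel W Y) [IsMarkovKernel p]
    (hp_weak : ∀ (wseq : ℕ → W) (w : W), Tendsto wseq atTop (𝓝 w) →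
      ∀ f : BoundedContinuousFunction Y ℝ,
        Tendsto (fun m => ∫ y, f y ∂(p (wseq m))) atTop (𝓝 (∫ y, f y ∂(p w))))
    (G : Y × W → ℝ) (Gseq : ℕ → Y × W → ℝ) (M : ℝ)
    (hG_meas : ∀ m, Measurable (Gseq m))
    (hG_bdd : ∀ m q, |Gseq m q| ≤ M)
    (hG_cont : Continuous G) (hG_cbdd : ∀ q, |G q| ≤ M)
    (hcc : ∀ (yseq : ℕ → Y) (wseq : ℕ → W) (y : Y) (w : W),
      Tendsto yseq atTop (𝓝 y) → Tendsto wseq atTop (𝓝 w) →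
      Tendsto (fun m => Gseq m (yseq m, wseq m)) atTop (𝓝 (G (y, w)))) :
    (∀ (m : ℕ) (w : W), |∫ y, Gseq m (y, w) ∂(p w)| ≤ M) ∧
    (∀ (wseq : ℕ → W) (w : W), Tendsto wseq atTop (𝓝 w) →
      Tendsto (fun m => ∫ y, Gseq m (y, wseq m) ∂(p (wseq m))) atTop
        (𝓝 (∫ y, G (y, w) ∂(p w)))) :=
  kernel_preserves_continuous_convergence_general p hp_weak G Gseq M hG_meas hG_bdd hG_cont hG_cbdd
    hcc
end

section
/- Let X be a metric space, A ⊆ X closed, L a locally convex topological vector space, and f : A → L continuous. Then there exists a continuous f_C : X → L with f_C = f on A and f_C(X) contained in the convex hull of f(A). -/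
/-!
Away from `A` the extension is glued by a partition of unity from constants `f p`, where `p ∈ A`
is a point whose distance to a point `y ∉ A` is less than twice `infDist y A`. For `y'` near such a
`y`, the triangle inequality gives `dist p x ≤ 6 * dist y' x` for every `x ∈ A`, so the value at
`y'` is a convex combination of values of `f` on `A ∩ closedBall x (6 * dist y' x)`. This single
estimate yields both the range condition and, since small balls around `x ∈ A` are mapped by `f`
into a given convex neighbourhood of `f x`, continuity at the points of `A`.
-/

open Filter Metric Set Topology

section MetricSpace

variable {X : Type*} [MetricSpace X] {A : Set X}

theorem dist_le_six_mul_dist_of_dist_lt_infDist {x y y' p : X}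
    (hp : dist y p < 2 * infDist y A) (hy' : dist y' y < infDist y A / 2) (hx : x ∈ A) :
    dist p x ≤ 6 * dist y' x := by
  have hy'x : infDist y' A ≤ dist y' x := infDist_le_dist_of_mem hx
  have hyy' : infDist y A ≤ infDist y' A + dist y y' := infDist_le_infDist_add_dist
  have hpx : dist p x ≤ dist p y + dist y y' + dist y' x := dist_triangle4 _ _ _ _
  rw [dist_comm p y] at hpx
  rw [dist_comm y y'] at hyy' hpx
  linarith

variable {L : Type*} [AddCommGroup L] [Module ℝ L]

def dugundjiHull (A : Set X) (f : X → L) (z : X) : Set L :=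
  ⋂ x ∈ A, convexHull ℝ (f '' (A ∩ closedBall x (6 * dist z x)))

theorem convex_dugundjiHull (f : X → L) (z : X) : Convex ℝ (dugundjiHull A f z) :=
  convex_iInter₂ fun _ _ => convex_convexHull ℝ _

theorem mem_dugundjiHull_self (f : X → L) {z : X} (hz : z ∈ A) : f z ∈ dugundjiHull A f z :=
  mem_iInter₂.2 fun x _ => subset_convexHull ℝ _ <|
    mem_image_of_mem f ⟨hz, mem_closedBall.2 <| by linarith [dist_nonneg (x := z) (y := x)]⟩

theorem dugundjiHull_subset_convexHull (hA : A.Nonempty) (f : X → L) (z : X) :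
    dugundjiHull A f z ⊆ convexHull ℝ (f '' A) := by
  obtain ⟨x, hx⟩ := hA
  exact (iInter₂_subset x hx).trans <| convexHull_mono <| image_mono inter_subset_left

variable [TopologicalSpace L]

theorem exists_continuous_compl_mem_dugundjiHull [ContinuousAdd L] [ContinuousSMul ℝ L]
    (hA : IsClosed A) (hA_ne : A.Nonempty) (f : X → L) :
    ∃ g : C(↥Aᶜ, L), ∀ y : ↥Aᶜ, g y ∈ dugundjiHull A f y := by
  refine exists_continuous_forall_mem_convex_of_local_const (fun _ => convex_dugundjiHull f _)
    fun y => ?_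
  have hy : 0 < infDist (y : X) A := (hA.notMem_iff_infDist_pos hA_ne).1 y.2
  obtain ⟨p, hpA, hp⟩ := (infDist_lt_iff hA_ne).1 (by linarith : infDist (y : X) A < 2 * _)
  refine ⟨f p, ?_⟩
  have hball : ball y (infDist (y : X) A / 2) ∈ 𝓝 y := ball_mem_nhds _ (by linarith)
  filter_upwards [hball] with y' hy'
  exact mem_iInter₂.2 fun x hx => subset_convexHull ℝ _ <| mem_image_of_mem f
    ⟨hpA, mem_closedBall.2 <| dist_le_six_mul_dist_of_dist_lt_infDist hp hy' hx⟩

theorem tendsto_of_forall_mem_dugundjiHull [LocallyConvexSpace ℝ L] {f F : X → L} {x : X}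
    (hx : x ∈ A) (hf : ContinuousWithinAt f A x) (hF : ∀ z, F z ∈ dugundjiHull A f z) :
    Tendsto F (𝓝 x) (𝓝 (f x)) := by
  rw [(LocallyConvexSpace.convex_basis (𝕜 := ℝ) (f x)).tendsto_right_iff]
  rintro W ⟨hW, hWc⟩
  obtain ⟨δ, hδ, hδW⟩ := mem_nhdsWithin_iff.1 (hf hW)
  filter_upwards [ball_mem_nhds x (by linarith : 0 < δ / 6)] with z hz
  replace hz : 6 * dist z x < δ := by linarith [mem_ball.1 hz]
  refine convexHull_min ?_ hWc (mem_iInter₂.1 (hF z) x hx)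
  rintro _ ⟨a, ⟨haA, ha⟩, rfl⟩
  exact hδW ⟨mem_ball.2 <| (mem_closedBall.1 ha).trans_lt hz, haA⟩

end MetricSpace

/-- Dugundji's extension theorem: a continuous map `f` from a (nonempty)
closed subset `A` of a metric space `X` into a locally convex topological vector space `L`
extends to a continuous map `f_C : X → L` whose image lies in the convex hull of `f(A)`. -/
theorem dugundji_extension
    {X : Type*} [MetricSpace X]
    {L : Type*} [AddCommGroup L] [Module ℝ L] [TopologicalSpace L]
    [IsTopologicalAddGroup L] [ContinuousSMul ℝ L] [LocallyConvexSpace ℝ L]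
    (A : Set X) (hA_closed : IsClosed A) (hA_ne : A.Nonempty)
    (f : X → L) (hf : ContinuousOn f A) :
    ∃ fC : X → L, Continuous fC ∧ (∀ a ∈ A, fC a = f a) ∧
      ∀ x, fC x ∈ convexHull ℝ (f '' A) := by
  classical
  obtain ⟨g, hg⟩ := exists_continuous_compl_mem_dugundjiHull hA_closed hA_ne f
  let fC : X → L := fun x => if h : x ∈ A then f x else g ⟨x, h⟩
  have hfC_A : ∀ a ∈ A, fC a = f a := fun a ha => dif_pos ha
  have hfC_hull : ∀ z, fC z ∈ dugundjiHull A f z := fun z => by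
    by_cases hz : z ∈ A
    · simpa [fC, hz] using mem_dugundjiHull_self f hz
    · simpa [fC, hz] using hg ⟨z, hz⟩
  refine ⟨fC, continuous_iff_continuousAt.2 fun x => ?_, hfC_A,
    fun x => dugundjiHull_subset_convexHull hA_ne f x (hfC_hull x)⟩
  by_cases hx : x ∈ A
  · rw [ContinuousAt, hfC_A x hx]
    exact tendsto_of_forall_mem_dugundjiHull hx (hf x hx) hfC_hull
  · have hcont : ContinuousOn fC Aᶜ := by
      rw [continuousOn_iff_continuous_domRestrict]
      exact g.continuous.congr fun y => (dif_neg y.2 : fC y = g y).symm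
    exact hcont.continuousAt (hA_closed.isOpen_compl.mem_nhds hx)
end

section
/- Let W be a Polish space, Y a Polish space, μ a finite Borel measure on W, and p a stochastic kernel from W to Y (i.e., a Borel-measurable map from W into P(Y) with the weak topology). Then for every β > 0 there exists a stochastic kernel p_C from W to Y such that w ↦ p_C(·|w) is continuous from W into P(Y) with the weak topology, and μ{w : p_C(·|w) ≠ p(·|w)} < β. -/
/-!
Since `Y` is separable, so is `P(Y)`: pushing a measure forward by simple functions with values
in a countable dense set approximates it weakly, and such push-forwards come from the compact
metrizable spaces `P(t)`, `t` finite. Hence `P(Y)` is second countable and Lusin's theorem makes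
`p` continuous on a closed set `F` of almost full measure. Dugundji's construction extends `p`
from `F`: off `F`, average the values of `p` at nearby points of `F` with a partition of unity
subordinate to balls of radius comparable to the distance to `F`. Convexity of `P(Y)` keeps these
averages probability measures, and testing against bounded continuous functions reduces
continuity to the classical Dugundji estimate for real-valued functions.
-/

open MeasureTheory Filter Topology
open scoped NNReal ENNReal

section

open Set TopologicalSpace Metric

section Lusin

variable {W : Type*} [TopologicalSpace W] [MeasurableSpace W] [OpensMeasurableSpace W]
  {μ : Measure W} [μ.WeaklyRegular] [IsFiniteMeasure μ]

theorem MeasurableSet.exists_isClosed_subset_and_subset_compl {A : Set W} (hA : MeasurableSet A)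
    {ε : ℝ≥0∞} (hε : ε ≠ 0) :
    ∃ C D, IsClosed C ∧ IsClosed D ∧ C ⊆ A ∧ D ⊆ Aᶜ ∧ μ (C ∪ D)ᶜ < ε := by
  have hε2 : ε / 2 ≠ 0 := (ENNReal.half_pos hε).ne'
  obtain ⟨C, hCA, hC, hAC⟩ := hA.exists_isClosed_sdiff_lt (measure_ne_top μ A) hε2
  obtain ⟨D, hDA, hD, hAD⟩ := hA.compl.exists_isClosed_sdiff_lt (measure_ne_top μ Aᶜ) hε2
  refine ⟨C, D, hC, hD, hCA, hDA, ?_⟩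
  calc μ (C ∪ D)ᶜ ≤ μ ((A \ C) ∪ (Aᶜ \ D)) := measure_mono fun x hx => by
          by_cases hxA : x ∈ A <;> simp_all
    _ ≤ μ (A \ C) + μ (Aᶜ \ D) := measure_union_le _ _
    _ < ε / 2 + ε / 2 := ENNReal.add_lt_add hAC hAD
    _ = ε := ENNReal.add_halves ε

theorem Measurable.exists_isClosed_measure_compl_lt_continuousOn {Z : Type*} [TopologicalSpace Z]
    [SecondCountableTopology Z] [MeasurableSpace Z] [OpensMeasurableSpace Z] {p : W → Z}
    (hp : Measurable p) {ε : ℝ≥0∞} (hε : ε ≠ 0) :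
    ∃ F, IsClosed F ∧ μ Fᶜ < ε ∧ ContinuousOn p F := by
  obtain ⟨b, hbc, -, hb⟩ := exists_countable_basis Z
  have := hbc.to_subtype
  obtain ⟨δ, hδ_pos, hδ⟩ := ENNReal.exists_pos_sum_of_countable' hε b
  choose C D hC hD hCV hDV hCD using fun V : b =>
    (hp (hb.isOpen V.2).measurableSet).exists_isClosed_subset_and_subset_compl (μ := μ)
      (hδ_pos V).ne'
  refine ⟨⋂ V, C V ∪ D V, isClosed_iInter fun V => (hC V).union (hD V), ?_, ?_⟩
  · calc μ (⋂ V, C V ∪ D V)ᶜ = μ (⋃ V, (C V ∪ D V)ᶜ) := by rw [compl_iInter]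
      _ ≤ ∑' V, μ (C V ∪ D V)ᶜ := measure_iUnion_le _
      _ ≤ ∑' V, δ V := ENNReal.tsum_le_tsum fun V => (hCD V).le
      _ < ε := hδ
  · rw [continuousOn_iff_continuous_domRestrict, hb.continuous_iff]
    intro V hV
    -- a point of the set lies in `C V ∪ D V`, so it avoids `D V` iff it lies in `p ⁻¹' V`
    have hpre : (⋂ V, C V ∪ D V).domRestrict p ⁻¹' V = Subtype.val ⁻¹' (D ⟨V, hV⟩)ᶜ := by
      ext ⟨x, hx⟩
      refine ⟨fun hpx hxD => hDV _ hxD hpx, fun hxD => ?_⟩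
      rcases mem_iInter.1 hx ⟨V, hV⟩ with hxC | hxD'
      · exact hCV _ hxC
      · exact absurd hxD' hxD
    rw [hpre]
    exact (hD _).isOpen_compl.preimage continuous_subtype_val

end Lusin

namespace MeasureTheory.ProbabilityMeasure

variable {X Y : Type*} [MeasurableSpace X] [MeasurableSpace Y]

theorem map_mem_range_map_subtypeVal (ν : ProbabilityMeasure X) {f : X → Y}
    (hf : Measurable f) {t : Set Y} (ht : range f ⊆ t) :
    ν.map hf.aemeasurable ∈
      range fun m : ProbabilityMeasure t => m.map measurable_subtype_coe.aemeasurable := by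
  have hft : Measurable (codRestrict f t fun x => ht (mem_range_self x)) := hf.codRestrict _
  exact ⟨ν.map hft.aemeasurable, Subtype.ext (Measure.map_map measurable_subtype_coe hft)⟩

theorem tendsto_map_of_tendsto_id [TopologicalSpace Y] [OpensMeasurableSpace Y]
    (ν : ProbabilityMeasure Y) {f : ℕ → Y → Y} (hf : ∀ n, Measurable (f n))
    (hlim : ∀ y, Tendsto (fun n => f n y) atTop (𝓝 y)) :
    Tendsto (fun n => ν.map (hf n).aemeasurable) atTop (𝓝 ν) := by
  have h := (tendstoInDistribution_of_ae_tendsto (μ' := (ν : Measure Y))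
    (fun n => (hf n).aemeasurable) aemeasurable_id (ae_of_all _ hlim)).tendsto
  simp only [Measure.map_id] at h
  exact h

variable [MetricSpace Y] [BorelSpace Y]

theorem isSeparable_range_map_subtypeVal {t : Set Y} (ht : t.Finite) :
    TopologicalSpace.IsSeparable
      (range fun m : ProbabilityMeasure t => m.map measurable_subtype_coe.aemeasurable) := by
  have := ht.to_subtype
  let := pseudoMetrizableSpacePseudoMetric (ProbabilityMeasure t)
  exact isSeparable_range (continuous_map continuous_subtype_val)

instance [SeparableSpace Y] : SeparableSpace (ProbabilityMeasure Y) := by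
  obtain ⟨s, hsc, hsd⟩ := exists_countable_dense Y
  have := hsc.to_subtype
  have : Countable {t : Set Y // t.Finite ∧ t ⊆ s} :=
    (countable_ofPred_finite_subset hsc).to_subtype
  rw [← isSeparable_univ_iff]
  refine (TopologicalSpace.IsSeparable.iUnion fun t : {t : Set Y // t.Finite ∧ t ⊆ s} =>
    isSeparable_range_map_subtypeVal t.2.1).closure.mono fun ν _ => ?_
  have := ν.nonempty
  obtain ⟨y₀, h₀⟩ := hsd.nonempty
  set g : ℕ → SimpleFunc Y Y := SimpleFunc.approxOn id measurable_id s y₀ h₀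
  have hlim (y : Y) : Tendsto (fun n => g n y) atTop (𝓝 y) :=
    SimpleFunc.tendsto_approxOn measurable_id h₀ (hsd.closure_eq.symm ▸ mem_univ y)
  have hg_sub (n : ℕ) : range (g n) ⊆ s := by
    rintro _ ⟨y, rfl⟩
    exact SimpleFunc.approxOn_mem measurable_id h₀ n y
  refine mem_closure_of_tendsto (tendsto_map_of_tendsto_id ν (fun n => (g n).measurable) hlim)
    (Eventually.of_forall fun n => mem_iUnion.2 ⟨⟨range (g n), (g n).finite_range, hg_sub n⟩,
      map_mem_range_map_subtypeVal ν (g n).measurable subset_rfl⟩)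

instance [SeparableSpace Y] : SecondCountableTopology (ProbabilityMeasure Y) :=
  letI := pseudoMetrizableSpacePseudoMetric (ProbabilityMeasure Y)
  inferInstance

end MeasureTheory.ProbabilityMeasure

namespace PartitionOfUnity

variable {ι X Y : Type*} [TopologicalSpace X] [MeasurableSpace Y]

noncomputable def mixture (ρ : PartitionOfUnity ι X) (ν : ι → ProbabilityMeasure Y) (x : X) :
    ProbabilityMeasure Y :=
  ⟨∑ i ∈ ρ.finsupport x, ENNReal.ofReal (ρ i x) • (ν i : Measure Y), by
    constructor
    simp only [Measure.coe_finsetSum, Finset.sum_apply, Measure.smul_apply, measure_univ,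
      smul_eq_mul, mul_one]
    rw [← ENNReal.ofReal_sum_of_nonneg fun i _ => ρ.nonneg i x, ρ.sum_finsupport (mem_univ x),
      ENNReal.ofReal_one]⟩

theorem integral_mixture (ρ : PartitionOfUnity ι X) (ν : ι → ProbabilityMeasure Y) (x : X)
    {g : Y → ℝ} (hg : ∀ i, Integrable g (ν i)) :
    ∫ y, g y ∂(ρ.mixture ν x) = ∑ᶠ i, ρ i x • ∫ y, g y ∂(ν i) := by
  rw [← ρ.sum_finsupport_smul_eq_finsum (fun i _ => ∫ y, g y ∂(ν i))]
  simp only [mixture, ProbabilityMeasure.coe_mk]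
  rw [integral_finsetSum_measure fun i _ => (hg i).smul_measure ENNReal.ofReal_ne_top]
  simp only [integral_smul_measure, ENNReal.toReal_ofReal (ρ.nonneg _ x)]

end PartitionOfUnity

variable {W : Type*} [MetricSpace W]

structure DugundjiSystem (F : Set W) where
  partition : PartitionOfUnity (Fᶜ : Set W) (Fᶜ : Set W)
  anchor : (Fᶜ : Set W) → W
  anchor_mem : ∀ u, anchor u ∈ F
  dist_anchor_lt : ∀ u : (Fᶜ : Set W), dist (u : W) (anchor u) < 2 * infDist (u : W) F
  dist_lt_of_ne_zero :
    ∀ u x : (Fᶜ : Set W), partition u x ≠ 0 → dist (x : W) u < infDist (u : W) F / 2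

namespace DugundjiSystem

variable {F : Set W}

theorem nonempty (hF : IsClosed F) (hne : F.Nonempty) : Nonempty (DugundjiSystem F) := by
  have hpos : ∀ u : (Fᶜ : Set W), 0 < infDist (u : W) F :=
    fun u => (hF.notMem_iff_infDist_pos hne).1 u.2
  obtain ⟨ρ, hρ⟩ := PartitionOfUnity.exists_isSubordinate isClosed_univ
    (fun u : (Fᶜ : Set W) => Subtype.val ⁻¹' ball (u : W) (infDist (u : W) F / 2))
    (fun u => isOpen_ball.preimage continuous_subtype_val)
    (fun x _ => mem_iUnion.2 ⟨x, by simpa using hpos x⟩)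
  have hanchor (u : (Fᶜ : Set W)) : ∃ y ∈ F, dist (u : W) y < 2 * infDist (u : W) F :=
    (infDist_lt_iff hne).1 (by linarith [hpos u])
  choose a haF hau using hanchor
  exact ⟨⟨ρ, a, haF, hau, fun u x hx => hρ u (subset_closure hx)⟩⟩

theorem dist_anchor_lt_of_ne_zero (D : DugundjiSystem F) {x : W} (hx : x ∈ F)
    {u w : (Fᶜ : Set W)} (h : D.partition u w ≠ 0) :
    dist (D.anchor u) x < 6 * dist (w : W) x := by
  have hwu := D.dist_lt_of_ne_zero u w h
  have hau := D.dist_anchor_lt u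
  have hux : infDist (u : W) F ≤ dist (u : W) x := infDist_le_dist_of_mem hx
  have := dist_triangle (u : W) w x
  have := dist_triangle4 (D.anchor u) u w x
  linarith [dist_comm (D.anchor u) u, dist_comm (w : W) u]

open Classical in
noncomputable def extend {E : Type*} [AddCommMonoid E] [Module ℝ E] (D : DugundjiSystem F)
    (f : W → E) (w : W) : E :=
  if h : w ∈ F then f w else ∑ᶠ u, D.partition u ⟨w, h⟩ • f (D.anchor u)

theorem continuous_extend {E : Type*} [NormedAddCommGroup E] [NormedSpace ℝ E]
    (D : DugundjiSystem F) (hF : IsClosed F) {f : W → E} (hf : ContinuousOn f F) :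
    Continuous (D.extend f) := by
  rw [continuous_iff_continuousAt]
  intro x
  by_cases hx : x ∈ F
  · rw [Metric.continuousAt_iff]
    intro ε hε
    obtain ⟨δ, hδ, hfδ⟩ := Metric.continuousWithinAt_iff.1 (hf x hx) ε hε
    refine ⟨δ / 6, by positivity, fun w hw => ?_⟩
    rw [show D.extend f x = f x from by simp [extend, hx]]
    by_cases hwF : w ∈ F
    · rw [extend, dif_pos hwF]
      exact hfδ hwF (by linarith)
    · rw [extend, dif_neg hwF, ← mem_ball]
      -- a convex combination of values at anchors that are `δ`-close to `x`
      refine D.partition.finsum_smul_mem_convex (g := fun u _ => f (D.anchor u)) (mem_univ _)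
        (fun u hu => ?_) (convex_ball (f x) ε)
      exact hfδ (D.anchor_mem u) (by linarith [D.dist_anchor_lt_of_ne_zero hx hu])
  · have hcont : ContinuousOn (D.extend f) Fᶜ := by
      rw [continuousOn_iff_continuous_domRestrict]
      have : Fᶜ.domRestrict (D.extend f) = fun w => ∑ᶠ u, D.partition u w • f (D.anchor u) :=
        funext fun w => by simp [extend, show (w : W) ∉ F from w.2]
      rw [this]
      exact D.partition.continuous_finsum_smul fun u _ _ => continuousAt_const
    exact hcont.continuousAt (hF.isOpen_compl.mem_nhds hx)

variable {Y : Type*} [MeasurableSpace Y]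

open Classical in
noncomputable def extendMeasure (D : DugundjiSystem F) (p : W → ProbabilityMeasure Y) (w : W) :
    ProbabilityMeasure Y :=
  if h : w ∈ F then p w else D.partition.mixture (p ∘ D.anchor) ⟨w, h⟩

theorem integral_extendMeasure (D : DugundjiSystem F) (p : W → ProbabilityMeasure Y) (w : W)
    {g : Y → ℝ} (hg : ∀ v, Integrable g (p v)) :
    ∫ y, g y ∂(D.extendMeasure p w) = D.extend (fun v => ∫ y, g y ∂(p v)) w := by
  by_cases hw : w ∈ F
  · simp only [extendMeasure, extend, hw, dite_true]
  · simp only [extendMeasure, extend, hw, dite_false]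
    exact D.partition.integral_mixture _ _ fun u => hg _

theorem continuous_extendMeasure [TopologicalSpace Y] [OpensMeasurableSpace Y]
    (D : DugundjiSystem F) (hF : IsClosed F)
    {p : W → ProbabilityMeasure Y} (hp : ContinuousOn p F) : Continuous (D.extendMeasure p) := by
  refine ProbabilityMeasure.continuous_iff_forall_continuous_integral.2 fun g => ?_
  simp_rw [D.integral_extendMeasure p _ fun v => g.integrable (p v)]
  exact D.continuous_extend hF
    ((ProbabilityMeasure.continuous_integral_boundedContinuousFunction g).comp_continuousOn hp)

theorem extendMeasure_eqOn (D : DugundjiSystem F) (p : W → ProbabilityMeasure Y) :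
    EqOn (D.extendMeasure p) p F := fun _ hw => by simp [extendMeasure, hw]

end DugundjiSystem

theorem MeasureTheory.ProbabilityMeasure.exists_continuous_eqOn {Y : Type*} [TopologicalSpace Y]
    [MeasurableSpace Y] [OpensMeasurableSpace Y] {F : Set W} (hF : IsClosed F)
    {p : W → ProbabilityMeasure Y} (hp : ContinuousOn p F) :
    ∃ q : W → ProbabilityMeasure Y, Continuous q ∧ EqOn q p F := by
  rcases F.eq_empty_or_nonempty with rfl | hne
  · rcases isEmpty_or_nonempty W with hW | ⟨⟨w⟩⟩
    · exact ⟨p, continuous_of_discreteTopology, eqOn_empty _ _⟩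
    · exact ⟨fun _ => p w, continuous_const, eqOn_empty _ _⟩
  · obtain ⟨D⟩ := DugundjiSystem.nonempty hF hne
    exact ⟨D.extendMeasure p, D.continuous_extendMeasure hF hp, D.extendMeasure_eqOn p⟩

end

theorem lusin_dugundji_for_kernels_general
    {W : Type*} [MetricSpace W] [MeasurableSpace W] [BorelSpace W]
    {Y : Type*} [MetricSpace Y] [PolishSpace Y] [MeasurableSpace Y] [BorelSpace Y]
    (μ : Measure W) [IsFiniteMeasure μ]
    (p : W → ProbabilityMeasure Y)
    (hp : @Measurable W (ProbabilityMeasure Y) _ (borel (ProbabilityMeasure Y)) p)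
    (β : ℝ) (hβ : 0 < β) :
    ∃ pC : W → ProbabilityMeasure Y,
      Continuous pC ∧ μ {w | pC w ≠ p w} < ENNReal.ofReal β := by
  let : MeasurableSpace (ProbabilityMeasure Y) := borel _
  have : BorelSpace (ProbabilityMeasure Y) := ⟨rfl⟩
  obtain ⟨F, hF, hμF, hpF⟩ :=
    hp.exists_isClosed_measure_compl_lt_continuousOn (μ := μ) (ENNReal.ofReal_pos.2 hβ).ne'
  obtain ⟨q, hq, hqp⟩ := ProbabilityMeasure.exists_continuous_eqOn hF hpF
  have hdiff : {w | q w ≠ p w} ⊆ Fᶜ := fun w hw hwF => hw (hqp hwF)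
  exact ⟨q, hq, (measure_mono hdiff).trans_lt hμF⟩

/-- Lusin + Dugundji for stochastic kernels: a Borel-measurable map
`p : W → P(Y)` (weak topology on `P(Y)`) can be approximated by a weakly continuous
kernel `p_C` agreeing with `p` except on a set of `μ`-measure less than `β`. -/
theorem lusin_dugundji_for_kernels
    {W : Type*} [MetricSpace W] [PolishSpace W] [MeasurableSpace W] [BorelSpace W]
    {Y : Type*} [MetricSpace Y] [PolishSpace Y] [MeasurableSpace Y] [BorelSpace Y]
    (μ : Measure W) [IsFiniteMeasure μ]
    (p : W → ProbabilityMeasure Y)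
    (hp : @Measurable W (ProbabilityMeasure Y) _ (borel (ProbabilityMeasure Y)) p)
    (β : ℝ) (hβ : 0 < β) :
    ∃ pC : W → ProbabilityMeasure Y,
      Continuous pC ∧ μ {w | pC w ≠ p w} < ENNReal.ofReal β :=
  lusin_dugundji_for_kernels_general μ p hp β hβ
end

section
/- Consider a two-decision-maker sequential team with cost c(ω₀, u¹, u²), where DM1 observes y¹ and DM2 observes y². Suppose under channels (p¹, p²) the measurements are garblings of the measurements under channels (p̃¹, p̃²): y¹_{p} = g¹(y¹_{p̃}, ν₁) and y²_{p} = g²(y²_{p̃}, ν₂) for measurable g¹, g², with ν₁, ν₂ independent randomization variables. Then the optimal (infimum over measurable, possibly randomized, policy pairs) expected cost under (p¹, p²) is greater than or equal to the optimal expected cost under (p̃¹, p̃²). -/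
open MeasureTheory ProbabilityTheory Filter Topology
open scoped NNReal ENNReal

/-! A policy of a DM that sees the garbled measurement `gⁱ(ỹⁱ, νᵢ)` is itself a (randomized)
policy of a DM that sees `(ỹⁱ, νᵢ)`, namely `γⁱ ∘ gⁱ`, with the same expected cost. So the
costs attainable after garbling form a subset of those attainable before, and the infimum of a
larger set bounded below is smaller. The only care needed is for the junk value `sInf ∅ = 0`:
since `P` is a probability measure, `Ω` is inhabited, so constant policies show that both sets
are nonempty as soon as one of them is. -/

theorem Real.sInf_le_sInf_of_subset {S T : Set ℝ} (hTS : T ⊆ S) (hS : BddBelow S)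
    (hne : S.Nonempty → T.Nonempty) : sInf S ≤ sInf T := by
  rcases S.eq_empty_or_nonempty with rfl | hSne
  · rw [Set.subset_empty_iff.mp hTS]
  · exact csInf_le_csInf hS (hne hSne) hTS

section TeamPolicyCosts

variable {Ω Ω₀ Z₁ Z₂ U₁ U₂ : Type*} [MeasurableSpace Ω] [MeasurableSpace Z₁]
  [MeasurableSpace Z₂] [MeasurableSpace U₁] [MeasurableSpace U₂]

def teamPolicyCosts (P : Measure Ω) (ω₀ : Ω → Ω₀) (z₁ : Ω → Z₁) (z₂ : Ω → Z₂)
    (c : Ω₀ → U₁ → U₂ → ℝ) : Set ℝ :=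
  {r | ∃ (γ₁ : Z₁ → U₁) (γ₂ : Z₂ → U₂), Measurable γ₁ ∧ Measurable γ₂ ∧
    r = ∫ ω, c (ω₀ ω) (γ₁ (z₁ ω)) (γ₂ (z₂ ω)) ∂P}

theorem teamPolicyCosts_comp_subset {Y₁ Y₂ : Type*} [MeasurableSpace Y₁] [MeasurableSpace Y₂]
    (P : Measure Ω) (ω₀ : Ω → Ω₀) (z₁ : Ω → Z₁) (z₂ : Ω → Z₂) (c : Ω₀ → U₁ → U₂ → ℝ)
    {g₁ : Z₁ → Y₁} {g₂ : Z₂ → Y₂} (hg₁ : Measurable g₁) (hg₂ : Measurable g₂) :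
    teamPolicyCosts P ω₀ (fun ω => g₁ (z₁ ω)) (fun ω => g₂ (z₂ ω)) c ⊆
      teamPolicyCosts P ω₀ z₁ z₂ c := by
  rintro r ⟨γ₁, γ₂, hγ₁, hγ₂, rfl⟩
  exact ⟨γ₁ ∘ g₁, γ₂ ∘ g₂, hγ₁.comp hg₁, hγ₂.comp hg₂, rfl⟩

theorem teamPolicyCosts_nonempty_of_nonempty {Y₁ Y₂ : Type*} [MeasurableSpace Y₁]
    [MeasurableSpace Y₂] [Nonempty Ω] (P : Measure Ω) (ω₀ : Ω → Ω₀) (z₁ : Ω → Z₁)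
    (z₂ : Ω → Z₂) (y₁ : Ω → Y₁) (y₂ : Ω → Y₂) (c : Ω₀ → U₁ → U₂ → ℝ)
    (h : (teamPolicyCosts P ω₀ z₁ z₂ c).Nonempty) :
    (teamPolicyCosts P ω₀ y₁ y₂ c).Nonempty := by
  obtain ⟨-, γ₁, γ₂, -, -, -⟩ := h
  obtain ⟨ω⟩ := ‹Nonempty Ω›
  exact ⟨_, fun _ => γ₁ (z₁ ω), fun _ => γ₂ (z₂ ω), measurable_const, measurable_const, rfl⟩

theorem teamPolicyCosts_bddBelow (P : Measure Ω) [IsFiniteMeasure P] (ω₀ : Ω → Ω₀)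
    (z₁ : Ω → Z₁) (z₂ : Ω → Z₂) {c : Ω₀ → U₁ → U₂ → ℝ} {M : ℝ}
    (hc : ∀ w u₁ u₂, |c w u₁ u₂| ≤ M) :
    BddBelow (teamPolicyCosts P ω₀ z₁ z₂ c) := by
  refine ⟨-(M * P.real Set.univ), ?_⟩
  rintro r ⟨γ₁, γ₂, -, -, rfl⟩
  have hnorm := norm_integral_le_of_norm_le_const (μ := P)
    (f := fun ω => c (ω₀ ω) (γ₁ (z₁ ω)) (γ₂ (z₂ ω))) (.of_forall fun ω => hc _ _ _)
  exact neg_le_of_abs_le hnorm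

end TeamPolicyCosts

theorem garbling_does_not_decrease_cost_general
    {Ω : Type*} [MeasurableSpace Ω] (P : Measure Ω) [IsProbabilityMeasure P]
    {Ω₀ : Type*} [MeasurableSpace Ω₀]
    {Ytil₁ Ytil₂ N₁ N₂ Y₁ Y₂ : Type*}
    [MeasurableSpace Ytil₁] [MeasurableSpace Ytil₂] [MeasurableSpace N₁]
    [MeasurableSpace N₂] [MeasurableSpace Y₁] [MeasurableSpace Y₂]
    {U₁ U₂ : Type*} [MeasurableSpace U₁] [MeasurableSpace U₂]
    (ω₀ : Ω → Ω₀) (ytil₁ : Ω → Ytil₁) (ytil₂ : Ω → Ytil₂) (ν₁ : Ω → N₁) (ν₂ : Ω → N₂)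
    (g₁ : Ytil₁ × N₁ → Y₁) (g₂ : Ytil₂ × N₂ → Y₂)
    (hg₁ : Measurable g₁) (hg₂ : Measurable g₂)
    (c : Ω₀ → U₁ → U₂ → ℝ)
    (M : ℝ) (hc_bdd : ∀ w u₁ u₂, |c w u₁ u₂| ≤ M) :
    sInf {r : ℝ | ∃ (γ₁ : Y₁ → U₁) (γ₂ : Y₂ → U₂), Measurable γ₁ ∧ Measurable γ₂ ∧
        r = ∫ ω, c (ω₀ ω) (γ₁ (g₁ (ytil₁ ω, ν₁ ω))) (γ₂ (g₂ (ytil₂ ω, ν₂ ω))) ∂P} ≥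
    sInf {r : ℝ | ∃ (γ₁ : Ytil₁ × N₁ → U₁) (γ₂ : Ytil₂ × N₂ → U₂),
        Measurable γ₁ ∧ Measurable γ₂ ∧
        r = ∫ ω, c (ω₀ ω) (γ₁ (ytil₁ ω, ν₁ ω)) (γ₂ (ytil₂ ω, ν₂ ω)) ∂P} := by
  set z₁ : Ω → Ytil₁ × N₁ := fun ω => (ytil₁ ω, ν₁ ω)
  set z₂ : Ω → Ytil₂ × N₂ := fun ω => (ytil₂ ω, ν₂ ω)
  have := nonempty_of_isProbabilityMeasure P
  change sInf (teamPolicyCosts P ω₀ z₁ z₂ c) ≤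
    sInf (teamPolicyCosts P ω₀ (fun ω => g₁ (z₁ ω)) (fun ω => g₂ (z₂ ω)) c)
  exact Real.sInf_le_sInf_of_subset (teamPolicyCosts_comp_subset P ω₀ z₁ z₂ c hg₁ hg₂)
    (teamPolicyCosts_bddBelow P ω₀ z₁ z₂ hc_bdd)
    (teamPolicyCosts_nonempty_of_nonempty P ω₀ z₁ z₂ _ _ c)

/-- Blackwell garbling for a two-DM sequential team: if each DM's
measurement under channels `(p¹, p²)` is a garbling `yⁱ = gⁱ(ỹⁱ, νᵢ)` of its measurement
under `(p̃¹, p̃²)` (with independent randomization variables `νᵢ`), then the optimal expected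
cost over measurable policies based on the garbled measurements is at least the optimal
expected cost over (possibly randomized) measurable policies based on the original
measurements. -/
theorem garbling_does_not_decrease_cost
    {Ω : Type*} [MeasurableSpace Ω] (P : Measure Ω) [IsProbabilityMeasure P]
    {Ω₀ : Type*} [MeasurableSpace Ω₀]
    {Ytil₁ Ytil₂ N₁ N₂ Y₁ Y₂ : Type*}
    [MeasurableSpace Ytil₁] [MeasurableSpace Ytil₂] [MeasurableSpace N₁]
    [MeasurableSpace N₂] [MeasurableSpace Y₁] [MeasurableSpace Y₂]
    {U₁ U₂ : Type*} [MeasurableSpace U₁] [MeasurableSpace U₂]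
    (ω₀ : Ω → Ω₀) (ytil₁ : Ω → Ytil₁) (ytil₂ : Ω → Ytil₂) (ν₁ : Ω → N₁) (ν₂ : Ω → N₂)
    (hω₀ : Measurable ω₀) (hytil₁ : Measurable ytil₁) (hytil₂ : Measurable ytil₂)
    (hν₁ : Measurable ν₁) (hν₂ : Measurable ν₂)
    -- the randomization variables (ν₁, ν₂) are independent of each other and of (ω₀, ỹ¹, ỹ²)
    (hindep₁ : IndepFun ν₁ ν₂ P)
    (hindep₂ : IndepFun (fun ω => (ν₁ ω, ν₂ ω)) (fun ω => (ω₀ ω, ytil₁ ω, ytil₂ ω)) P)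
    (g₁ : Ytil₁ × N₁ → Y₁) (g₂ : Ytil₂ × N₂ → Y₂)
    (hg₁ : Measurable g₁) (hg₂ : Measurable g₂)
    (c : Ω₀ → U₁ → U₂ → ℝ)
    (hc_meas : Measurable fun q : Ω₀ × U₁ × U₂ => c q.1 q.2.1 q.2.2)
    (M : ℝ) (hc_bdd : ∀ w u₁ u₂, |c w u₁ u₂| ≤ M) :
    sInf {r : ℝ | ∃ (γ₁ : Y₁ → U₁) (γ₂ : Y₂ → U₂), Measurable γ₁ ∧ Measurable γ₂ ∧
        r = ∫ ω, c (ω₀ ω) (γ₁ (g₁ (ytil₁ ω, ν₁ ω))) (γ₂ (g₂ (ytil₂ ω, ν₂ ω))) ∂P} ≥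
    sInf {r : ℝ | ∃ (γ₁ : Ytil₁ × N₁ → U₁) (γ₂ : Ytil₂ × N₂ → U₂),
        Measurable γ₁ ∧ Measurable γ₂ ∧
        r = ∫ ω, c (ω₀ ω) (γ₁ (ytil₁ ω, ν₁ ω)) (γ₂ (ytil₂ ω, ν₂ ω)) ∂P} :=
  garbling_does_not_decrease_cost_general P ω₀ ytil₁ ytil₂ ν₁ ν₂ g₁ g₂ hg₁ hg₂ c M hc_bdd
end

section
/- Let Ω₀, Y be Polish spaces with Y ⊆ ℝ^k, P a probability measure on Ω₀, p any stochastic kernel from Ω₀ to Y, τ_m the additive Gaussian noise kernel of variance 1/m on ℝ^k, U ⊆ ℝ^n convex, and c : Ω₀ × U → ℝ bounded continuous. Define J*(p) := inf over measurable γ : ℝ^k → U of ∫∫ c(ω₀, γ(y)) P(dω₀) p(dy|ω₀), and J*(pτ_m) := inf over measurable γ : ℝ^k → U of ∫∫∫ c(ω₀, γ(z)) P(dω₀) p(dy|ω₀) τ_m(dz|y). Then lim_{m→∞} J*(pτ_m) = J*(p). -/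
open MeasureTheory ProbabilityTheory Filter Topology
open scoped NNReal ENNReal

/-!
Write `μ = P ⊗ₘ p` for the joint law of the state and the observation. Since the noise is
independent of everything else, the noisy cost of a policy `γ` is the Gaussian average over `w`
of the noiseless cost of the translated policy `γ (· + w)`, which is itself admissible; hence
`J*(p) ≤ J*(pτ_m)`. Conversely, `J*(p)` is approached by continuous policies: approximate a
near-optimal policy by a `U`-valued simple function, then, by Lusin's theorem, by a continuous
function that agrees with it outside a set of small mass, glued from its values by a partition
of unity so that convexity keeps it `U`-valued. For a continuous policy the noisy cost converges
to the noiseless one as the noise concentrates at `0`.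
-/

/-- The Gaussian measure on `ℝ^k` with mean `y` and covariance `(1/m)·I`. -/
noncomputable def gaussPi (k : ℕ) (m : ℕ) (y : Fin k → ℝ) : Measure (Fin k → ℝ) :=
  Measure.pi fun i => gaussianReal (y i) ((m : ℝ≥0))⁻¹

instance (k m : ℕ) (y : Fin k → ℝ) : IsProbabilityMeasure (gaussPi k m y) := by
  unfold gaussPi; infer_instance

lemma gaussPi_eq_map_add (k m : ℕ) (y : Fin k → ℝ) :
    gaussPi k m y = (gaussPi k m 0).map (y + ·) := by
  refine ((measurePreserving_pi _ _ fun i => ⟨measurable_const_add (y i), ?_⟩).map_eq).symm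
  simp [gaussianReal_map_const_add]

lemma gaussPi_zero_eq_map_smul (k m : ℕ) :
    gaussPi k m 0 = (gaussPi k 1 0).map ((√m)⁻¹ • ·) := by
  refine ((measurePreserving_pi _ _ fun i => ⟨measurable_const_mul (√m)⁻¹, ?_⟩).map_eq).symm
  rw [Pi.zero_apply, gaussianReal_map_const_mul, mul_zero]
  congr 1
  ext
  simp [Real.sq_sqrt (Nat.cast_nonneg m)]

lemma integral_gaussPi_eq_integral_add {F : Type*} [NormedAddCommGroup F] [NormedSpace ℝ F]
    (k m : ℕ) (y : Fin k → ℝ) (f : (Fin k → ℝ) → F) :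
    ∫ z, f z ∂gaussPi k m y = ∫ w, f (y + w) ∂gaussPi k m 0 := by
  rw [gaussPi_eq_map_add k m y]
  exact integral_map_equiv (MeasurableEquiv.addLeft y) f

lemma tendsto_integral_gaussPi_zero {F : Type*} [NormedAddCommGroup F] [NormedSpace ℝ F]
    [CompleteSpace F] {k : ℕ} {f : (Fin k → ℝ) → F} (hf : Continuous f) {B : ℝ}
    (hB : ∀ x, ‖f x‖ ≤ B) :
    Tendsto (fun m : ℕ => ∫ w, f w ∂gaussPi k m 0) atTop (𝓝 (f 0)) := by
  have hscale : Tendsto (fun m : ℕ => (√m)⁻¹) atTop (𝓝 0) :=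
    tendsto_inv_atTop_zero.comp (Real.tendsto_sqrt_atTop.comp tendsto_natCast_atTop_atTop)
  have hdom := tendsto_integral_of_dominated_convergence (μ := gaussPi k 1 0) (fun _ => B)
    (fun m => (hf.comp (continuous_const_smul (√(m : ℝ))⁻¹)).aestronglyMeasurable)
    (integrable_const B) (fun m => ae_of_all _ fun w => hB _)
    (ae_of_all _ fun w => hf.continuousAt.tendsto.comp (by simpa using hscale.smul_const w))
  have hrescale : ∀ m : ℕ, ∫ w, f w ∂gaussPi k m 0 = ∫ w, f ((√m)⁻¹ • w) ∂gaussPi k 1 0 :=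
    fun m => by
      rw [gaussPi_zero_eq_map_smul, integral_map (by fun_prop) hf.aestronglyMeasurable]
  simpa [hrescale] using hdom

lemma abs_integral_le_of_forall_abs_le {α : Type*} [MeasurableSpace α] {ν : Measure α}
    [IsProbabilityMeasure ν] {f : α → ℝ} {M : ℝ} (hf : ∀ x, |f x| ≤ M) : |∫ x, f x ∂ν| ≤ M := by
  simpa using norm_integral_le_of_norm_le_const (μ := ν) (f := f) (ae_of_all _ hf)

section ExpectedCost

variable {Ω X E : Type*} [MeasurableSpace Ω] [MeasurableSpace X]
  {μ : Measure (Ω × X)} {c : Ω × E → ℝ} {M : ℝ}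

noncomputable def expectedCost (μ : Measure (Ω × X)) (c : Ω × E → ℝ) (γ : X → E) : ℝ :=
  ∫ q, c (q.1, γ q.2) ∂μ

lemma abs_expectedCost_le [IsProbabilityMeasure μ] (hM : ∀ q, |c q| ≤ M) (γ : X → E) :
    |expectedCost μ c γ| ≤ M :=
  abs_integral_le_of_forall_abs_le fun _ => hM _

variable [MeasurableSpace E]

lemma integrable_comp_prodMk [IsFiniteMeasure μ] (hcm : Measurable c) (hM : ∀ q, |c q| ≤ M)
    {γ : X → E} (hγ : Measurable γ) : Integrable (fun q : Ω × X => c (q.1, γ q.2)) μ :=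
  .of_bound (hcm.comp (measurable_fst.prodMk (hγ.comp measurable_snd))).aestronglyMeasurable M
    (ae_of_all _ fun _ => hM _)

lemma abs_expectedCost_sub_le_of_eqOn [IsFiniteMeasure μ] (hcm : Measurable c)
    (hM : ∀ q, |c q| ≤ M) {g s : X → E} (hg : Measurable g) (hs : Measurable s) {K : Set X}
    (hK : MeasurableSet K) (hgs : Set.EqOn g s K) :
    |expectedCost μ c g - expectedCost μ c s| ≤ 2 * M * (μ.map Prod.snd).real Kᶜ := by
  have hbound : ∀ q : Ω × X, ‖c (q.1, g q.2) - c (q.1, s q.2)‖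
      ≤ (Prod.snd ⁻¹' Kᶜ).indicator (fun _ => 2 * M) q := by
    intro q
    by_cases hq : q.2 ∈ K
    · simp [hq, hgs hq]
    · simpa [hq, two_mul] using (abs_sub _ _).trans (add_le_add (hM _) (hM _))
  calc |expectedCost μ c g - expectedCost μ c s|
      = ‖∫ q, (c (q.1, g q.2) - c (q.1, s q.2)) ∂μ‖ := by
        rw [expectedCost, expectedCost, integral_sub (integrable_comp_prodMk hcm hM hg)
          (integrable_comp_prodMk hcm hM hs), Real.norm_eq_abs]
    _ ≤ ∫ q, (Prod.snd ⁻¹' Kᶜ).indicator (fun _ => 2 * M) q ∂μ :=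
        norm_integral_le_of_norm_le
          ((integrable_const _).indicator (measurable_snd hK.compl)) (ae_of_all _ hbound)
    _ = 2 * M * (μ.map Prod.snd).real Kᶜ := by
        rw [integral_indicator_const _ (measurable_snd hK.compl),
          map_measureReal_apply measurable_snd hK.compl, smul_eq_mul, mul_comm]

lemma tendsto_expectedCost_of_tendsto [IsFiniteMeasure μ] [TopologicalSpace E]
    (hcm : Measurable c) (hc : ∀ ω, Continuous fun u => c (ω, u)) (hM : ∀ q, |c q| ≤ M)
    {γ : X → E} {γs : ℕ → X → E} (hγs : ∀ j, Measurable (γs j))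
    (hlim : ∀ x, Tendsto (fun j => γs j x) atTop (𝓝 (γ x))) :
    Tendsto (fun j => expectedCost μ c (γs j)) atTop (𝓝 (expectedCost μ c γ)) :=
  tendsto_integral_of_dominated_convergence (fun _ => M)
    (fun j => (integrable_comp_prodMk hcm hM (hγs j)).aestronglyMeasurable) (integrable_const M)
    (fun _ => ae_of_all _ fun _ => hM _)
    (ae_of_all _ fun q => (hc q.1).continuousAt.tendsto.comp (hlim q.2))

end ExpectedCost

section OptimalCost

variable {X E : Type*} [MeasurableSpace X] [MeasurableSpace E] {U : Set E}
  {J J' : (X → E) → ℝ}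

/-- The paper's `J*` for the cost functional `J`; as an `sInf` in `ℝ` it is `0` when the
admissible costs are unbounded below. -/
noncomputable def optimalCost (U : Set E) (J : (X → E) → ℝ) : ℝ :=
  sInf {r | ∃ γ : X → E, Measurable γ ∧ (∀ x, γ x ∈ U) ∧ r = J γ}

lemma optimalCost_congr (h : ∀ γ, Measurable γ → J γ = J' γ) :
    optimalCost U J = optimalCost U J' := by
  unfold optimalCost
  congr 1
  ext r
  exact exists_congr fun γ => and_congr_right fun hγ => by rw [h γ hγ]

lemma optimalCost_le {b : ℝ} (hb : ∀ γ, b ≤ J γ) {γ : X → E} (hγ : Measurable γ)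
    (hγU : ∀ x, γ x ∈ U) : optimalCost U J ≤ J γ := by
  unfold optimalCost
  refine csInf_le ?_ ⟨γ, hγ, hγU, rfl⟩
  exact ⟨b, by rintro _ ⟨γ, -, -, rfl⟩; exact hb γ⟩

lemma le_optimalCost (hU : U.Nonempty) {a : ℝ}
    (h : ∀ γ : X → E, Measurable γ → (∀ x, γ x ∈ U) → a ≤ J γ) : a ≤ optimalCost U J := by
  obtain ⟨u, hu⟩ := hU
  refine le_csInf ⟨_, fun _ => u, measurable_const, fun _ => hu, rfl⟩ ?_
  rintro _ ⟨γ, hγ, hγU, rfl⟩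
  exact h γ hγ hγU

lemma exists_lt_of_optimalCost_lt (hU : U.Nonempty) {a : ℝ} (h : optimalCost U J < a) :
    ∃ γ : X → E, Measurable γ ∧ (∀ x, γ x ∈ U) ∧ J γ < a := by
  obtain ⟨u, hu⟩ := hU
  obtain ⟨_, ⟨γ, hγ, hγU, rfl⟩, hlt⟩ :=
    exists_lt_of_csInf_lt (by exact ⟨_, fun _ => u, measurable_const, fun _ => hu, rfl⟩) h
  exact ⟨γ, hγ, hγU, hlt⟩

end OptimalCost

section Translates

variable {Ω X E : Type*} [MeasurableSpace Ω] [MeasurableSpace X] [MeasurableSpace E]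
  [Add X] [MeasurableAdd₂ X] {μ : Measure (Ω × X)} {c : Ω × E → ℝ} {M : ℝ}

lemma integrable_comp_add_prod [IsFiniteMeasure μ] {ν : Measure X} [IsFiniteMeasure ν]
    (hcm : Measurable c) (hM : ∀ q, |c q| ≤ M) {γ : X → E} (hγ : Measurable γ) :
    Integrable (fun x : (Ω × X) × X => c (x.1.1, γ (x.1.2 + x.2))) (μ.prod ν) :=
  .of_bound (hcm.comp (measurable_fst.fst.prodMk
    (hγ.comp (measurable_fst.snd.add measurable_snd)))).aestronglyMeasurable M
    (ae_of_all _ fun _ => hM _)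

lemma integral_expectedCost_comp_add [IsFiniteMeasure μ] {ν : Measure X} [IsFiniteMeasure ν]
    (hcm : Measurable c) (hM : ∀ q, |c q| ≤ M) {γ : X → E} (hγ : Measurable γ) :
    ∫ w, expectedCost μ c (fun x => γ (x + w)) ∂ν = ∫ q, ∫ w, c (q.1, γ (q.2 + w)) ∂ν ∂μ :=
  (integral_integral_swap (integrable_comp_add_prod hcm hM hγ)).symm

lemma optimalCost_le_integral_expectedCost_comp_add [IsProbabilityMeasure μ] (ν : Measure X)
    [IsProbabilityMeasure ν] (hcm : Measurable c) (hM : ∀ q, |c q| ≤ M) {U : Set E}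
    {γ : X → E} (hγ : Measurable γ) (hγU : ∀ x, γ x ∈ U) :
    optimalCost U (expectedCost μ c) ≤ ∫ w, expectedCost μ c (fun x => γ (x + w)) ∂ν := by
  have hint : Integrable (fun w => expectedCost μ c (fun x => γ (x + w))) ν :=
    (integrable_comp_add_prod hcm hM hγ).integral_prod_right
  calc optimalCost U (expectedCost μ c) = ∫ _, optimalCost U (expectedCost μ c) ∂ν := by simp
    _ ≤ _ := integral_mono (integrable_const _) hint fun w =>
        optimalCost_le (fun γ => (abs_le.1 (abs_expectedCost_le hM γ)).1)
          (hγ.comp (measurable_add_const w)) fun _ => hγU _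

lemma continuous_expectedCost_comp_add [IsFiniteMeasure μ] [TopologicalSpace X]
    [ContinuousAdd X] [FirstCountableTopology X] [OpensMeasurableSpace X] [TopologicalSpace E]
    [BorelSpace E] (hcm : Measurable c) (hc : ∀ ω, Continuous fun u => c (ω, u))
    (hM : ∀ q, |c q| ≤ M) (g : C(X, E)) :
    Continuous fun w => expectedCost μ c (fun x => g (x + w)) :=
  continuous_of_dominated
    (fun w => (integrable_comp_prodMk hcm hM
      (g.continuous.measurable.comp (measurable_add_const w))).aestronglyMeasurable)
    (fun _ => ae_of_all _ fun _ => hM _) (integrable_const M)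
    (ae_of_all _ fun q => (hc q.1).comp (g.continuous.comp (continuous_const.add continuous_id)))

end Translates

section Lusin

variable {X E : Type*} [TopologicalSpace X] [NormalSpace X] [ParacompactSpace X]
  [AddCommGroup E] [Module ℝ E] [TopologicalSpace E] [ContinuousAdd E] [ContinuousSMul ℝ E]
  {U : Set E}

theorem exists_continuous_forall_mem_eqOn_iUnion {ι : Type*} [Finite ι] (hU : Convex ℝ U)
    {s : X → E} (hs : ∀ x, s x ∈ U) {F : ι → Set X} (hF : ∀ i, IsClosed (F i)) {v : ι → E}
    (hsF : ∀ i, ∀ x ∈ F i, s x = v i) :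
    ∃ g : C(X, E), (∀ x, g x ∈ U) ∧ Set.EqOn g s (⋃ i, F i) := by
  classical
  -- Near `x` the constant `s x` is admissible: the pieces `F i` with `v i ≠ s x` are closed
  -- and miss `x`.
  obtain ⟨g, hg⟩ := exists_continuous_forall_mem_convex_of_local_const
    (t := fun x => if x ∈ ⋃ i, F i then {s x} else U)
    (fun x => by split_ifs; exacts [convex_singleton _, hU]) fun x => by
      refine ⟨s x, ?_⟩
      have hopen : IsOpen (⋃ i ∈ {i | v i ≠ s x}, F i)ᶜ :=
        ((Set.toFinite _).isClosed_biUnion fun i _ => hF i).isOpen_compl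
      have hx : x ∈ (⋃ i ∈ {i | v i ≠ s x}, F i)ᶜ := fun hx => by
        obtain ⟨i, hi, hxi⟩ := Set.mem_iUnion₂.1 hx
        exact hi (hsF i x hxi).symm
      filter_upwards [hopen.mem_nhds hx] with y hy
      split_ifs with hyF
      · obtain ⟨i, hyi⟩ := Set.mem_iUnion.1 hyF
        rw [Set.mem_singleton_iff, hsF i y hyi]
        by_contra hne
        exact hy (Set.mem_biUnion (x := i) (Ne.symm hne) hyi)
      · exact hs x
  refine ⟨g, fun x => ?_, fun x hx => by simpa [hx] using hg x⟩
  have hgx := hg x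
  split_ifs at hgx
  · rw [Set.mem_singleton_iff.1 hgx]
    exact hs x
  · exact hgx

theorem MeasureTheory.SimpleFunc.exists_continuous_forall_mem_eqOn [MeasurableSpace X]
    [OpensMeasurableSpace X] (ρ : Measure X) [IsFiniteMeasure ρ] [ρ.WeaklyRegular]
    (hU : Convex ℝ U) (s : SimpleFunc X E) (hs : ∀ x, s x ∈ U) {ε : ℝ≥0∞} (hε : ε ≠ 0) :
    ∃ g : C(X, E), (∀ x, g x ∈ U) ∧ ∃ K, IsClosed K ∧ ρ Kᶜ < ε ∧ Set.EqOn g s K := by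
  obtain ⟨δ, hδpos, hδsum⟩ := ENNReal.exists_pos_sum_of_countable hε s.range
  have hF : ∀ u : s.range, ∃ F ⊆ s ⁻¹' {u.1}, IsClosed F ∧ ρ (s ⁻¹' {u.1} \ F) < δ u :=
    fun u => (s.measurableSet_fiber u).exists_isClosed_sdiff_lt (measure_ne_top _ _)
      (by simpa using (hδpos u).ne')
  choose F hFs hFclosed hFδ using hF
  have hcover : (⋃ u, F u)ᶜ ⊆ ⋃ u : s.range, s ⁻¹' {u.1} \ F u := fun x hx =>
    Set.mem_iUnion.2 ⟨⟨s x, s.mem_range_self x⟩, rfl, fun h => hx (Set.mem_iUnion.2 ⟨_, h⟩)⟩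
  have hsmall : ρ (⋃ u, F u)ᶜ < ε :=
    calc ρ (⋃ u, F u)ᶜ ≤ ∑' u : s.range, ρ (s ⁻¹' {u.1} \ F u) :=
          (measure_mono hcover).trans (measure_iUnion_le _)
      _ ≤ ∑' u : s.range, (δ u : ℝ≥0∞) := ENNReal.tsum_le_tsum fun u => (hFδ u).le
      _ < ε := hδsum
  obtain ⟨g, hgU, hgs⟩ :=
    exists_continuous_forall_mem_eqOn_iUnion hU hs hFclosed fun u x hx => hFs u hx
  exact ⟨g, hgU, _, isClosed_iUnion_of_finite hFclosed, hsmall, hgs⟩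

end Lusin

section ContinuousPolicies

variable {Ω X E : Type*} [MeasurableSpace Ω] [MetricSpace X] [MeasurableSpace X] [BorelSpace X]
  [NormedAddCommGroup E] [NormedSpace ℝ E] [MeasurableSpace E] [BorelSpace E]
  {μ : Measure (Ω × X)} [IsProbabilityMeasure μ] {c : Ω × E → ℝ} {M : ℝ} {U : Set E} {a : ℝ}

lemma MeasureTheory.SimpleFunc.exists_continuous_expectedCost_lt (hcm : Measurable c)
    (hM : ∀ q, |c q| ≤ M) (hU : Convex ℝ U) (s : SimpleFunc X E) (hs : ∀ x, s x ∈ U)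
    (ha : expectedCost μ c s < a) : ∃ g : C(X, E), (∀ x, g x ∈ U) ∧ expectedCost μ c g < a := by
  have hM0 : 0 ≤ M := (abs_nonneg _).trans (abs_expectedCost_le (μ := μ) hM s)
  obtain ⟨θ, hθ, hθa⟩ := exists_pos_mul_lt (sub_pos.2 ha) (2 * M)
  obtain ⟨g, hgU, K, hK, hKθ, hgs⟩ :=
    s.exists_continuous_forall_mem_eqOn (μ.map Prod.snd) hU hs (ENNReal.ofReal_pos.2 hθ).ne'
  refine ⟨g, hgU, ?_⟩
  have hdiff := abs_expectedCost_sub_le_of_eqOn (μ := μ) hcm hM g.continuous.measurable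
    s.measurable hK.measurableSet hgs
  have hKθ' : (μ.map Prod.snd).real Kᶜ ≤ θ := (ENNReal.toReal_lt_of_lt_ofReal hKθ).le
  nlinarith [abs_le.1 hdiff]

lemma exists_continuous_expectedCost_lt [SecondCountableTopology E] (hcm : Measurable c)
    (hc : ∀ ω, Continuous fun u => c (ω, u)) (hM : ∀ q, |c q| ≤ M) (hU : Convex ℝ U)
    {u₀ : E} (hu₀ : u₀ ∈ U) {γ : X → E} (hγ : Measurable γ) (hγU : ∀ x, γ x ∈ U)
    (ha : expectedCost μ c γ < a) : ∃ g : C(X, E), (∀ x, g x ∈ U) ∧ expectedCost μ c g < a := by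
  have happrox := tendsto_expectedCost_of_tendsto (μ := μ) hcm hc hM
    (fun j => (SimpleFunc.approxOn γ hγ U u₀ hu₀ j).measurable)
    fun x => SimpleFunc.tendsto_approxOn hγ hu₀ (subset_closure (hγU x))
  obtain ⟨j, hj⟩ := (happrox.eventually_lt_const ha).exists
  exact SimpleFunc.exists_continuous_expectedCost_lt hcm hM hU _
    (SimpleFunc.approxOn_mem hγ hu₀ j) hj

end ContinuousPolicies

section GaussianNoise

variable {Ω E : Type*} [MeasurableSpace Ω] [MeasurableSpace E] {k : ℕ} {c : Ω × E → ℝ} {M : ℝ}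

lemma integral_integral_integral_gaussPi_eq_integral_expectedCost (P : Measure Ω)
    [IsFiniteMeasure P] (p : Kernel Ω (Fin k → ℝ)) [IsFiniteKernel p] (hcm : Measurable c)
    (hM : ∀ q, |c q| ≤ M) {γ : (Fin k → ℝ) → E} (hγ : Measurable γ) (m : ℕ) :
    ∫ ω, ∫ y, ∫ z, c (ω, γ z) ∂gaussPi k m y ∂p ω ∂P
      = ∫ w, expectedCost (P ⊗ₘ p) c (fun x => γ (x + w)) ∂gaussPi k m 0 := by
  rw [integral_expectedCost_comp_add hcm hM hγ,
    Measure.integral_compProd (integrable_comp_add_prod hcm hM hγ).integral_prod_left]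
  exact integral_congr_ae (ae_of_all _ fun ω =>
    integral_congr_ae (ae_of_all _ fun y => integral_gaussPi_eq_integral_add k m y _))

variable [NormedAddCommGroup E] [NormedSpace ℝ E] [BorelSpace E] [SecondCountableTopology E]
  {μ : Measure (Ω × (Fin k → ℝ))} [IsProbabilityMeasure μ] {U : Set E}

theorem tendsto_optimalCost_gaussPi (hcm : Measurable c)
    (hc : ∀ ω, Continuous fun u => c (ω, u)) (hM : ∀ q, |c q| ≤ M) (hU : Convex ℝ U)
    (hU_ne : U.Nonempty) :
    Tendsto (fun m : ℕ => optimalCost U fun γ : (Fin k → ℝ) → E =>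
        ∫ w, expectedCost μ c (fun x => γ (x + w)) ∂gaussPi k m 0)
      atTop (𝓝 (optimalCost U (expectedCost μ c))) := by
  have hlower : ∀ m : ℕ, optimalCost U (expectedCost μ c) ≤ optimalCost U fun γ =>
      ∫ w, expectedCost μ c (fun x => γ (x + w)) ∂gaussPi k m 0 := fun m =>
    le_optimalCost hU_ne fun γ hγ hγU =>
      optimalCost_le_integral_expectedCost_comp_add _ hcm hM hγ hγU
  refine tendsto_order.2 ⟨fun a ha => .of_forall fun m => ha.trans_le (hlower m), fun a ha => ?_⟩
  obtain ⟨γ, hγ, hγU, hγa⟩ := exists_lt_of_optimalCost_lt hU_ne ha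
  obtain ⟨g, hgU, hga⟩ :=
    exists_continuous_expectedCost_lt hcm hc hM hU hU_ne.some_mem hγ hγU hγa
  have hlim : Tendsto (fun m : ℕ => ∫ w, expectedCost μ c (fun x => g (x + w)) ∂gaussPi k m 0)
      atTop (𝓝 (expectedCost μ c g)) := by
    simpa using tendsto_integral_gaussPi_zero (continuous_expectedCost_comp_add hcm hc hM g)
      fun _ => abs_expectedCost_le hM _
  filter_upwards [hlim.eventually_lt_const hga] with m hm
  refine (optimalCost_le (b := -M) (fun γ => ?_) g.continuous.measurable hgU).trans_lt hm
  exact (abs_le.1 (abs_integral_le_of_forall_abs_le fun _ => abs_expectedCost_le hM _)).1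

end GaussianNoise

theorem single_dm_main_theorem_general
    {Ω₀ : Type*} [MetricSpace Ω₀] [MeasurableSpace Ω₀] [BorelSpace Ω₀]
    (k n : ℕ) (P : Measure Ω₀) [IsProbabilityMeasure P]
    (p : Kernel Ω₀ (Fin k → ℝ)) [IsMarkovKernel p]
    (U : Set (Fin n → ℝ)) (hU_conv : Convex ℝ U) (hU_ne : U.Nonempty)
    (c : Ω₀ × (Fin n → ℝ) → ℝ) (M : ℝ) (hc_cont : Continuous c) (hc_bdd : ∀ q, |c q| ≤ M) :
    Tendsto (fun m : ℕ =>
        sInf {r : ℝ | ∃ γ : (Fin k → ℝ) → (Fin n → ℝ), Measurable γ ∧ (∀ z, γ z ∈ U) ∧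
          r = ∫ ω₀, ∫ y, ∫ z, c (ω₀, γ z) ∂(gaussPi k m y) ∂(p ω₀) ∂P})
      atTop
      (𝓝 (sInf {r : ℝ | ∃ γ : (Fin k → ℝ) → (Fin n → ℝ), Measurable γ ∧ (∀ y, γ y ∈ U) ∧
          r = ∫ ω₀, ∫ y, c (ω₀, γ y) ∂(p ω₀) ∂P})) := by
  have hcm : Measurable c := hc_cont.measurable
  have key := tendsto_optimalCost_gaussPi (μ := P ⊗ₘ p) hcm
    (fun ω => hc_cont.comp (Continuous.prodMk_right ω)) hc_bdd hU_conv hU_ne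
  have hnoisy : ∀ m : ℕ, optimalCost U (fun γ : (Fin k → ℝ) → (Fin n → ℝ) =>
      ∫ w, expectedCost (P ⊗ₘ p) c (fun x => γ (x + w)) ∂gaussPi k m 0)
        = optimalCost U fun γ => ∫ ω₀, ∫ y, ∫ z, c (ω₀, γ z) ∂(gaussPi k m y) ∂(p ω₀) ∂P :=
    fun m => optimalCost_congr fun γ hγ =>
      (integral_integral_integral_gaussPi_eq_integral_expectedCost P p hcm hc_bdd hγ m).symm
  have hclean : optimalCost U (expectedCost (P ⊗ₘ p) c)
      = optimalCost U fun γ : (Fin k → ℝ) → (Fin n → ℝ) => ∫ ω₀, ∫ y, c (ω₀, γ y) ∂(p ω₀) ∂P :=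
    optimalCost_congr fun γ hγ => Measure.integral_compProd (integrable_comp_prodMk hcm hc_bdd hγ)
  simp only [hnoisy, hclean] at key
  exact key

/-- Single-DM version of the main theorem: with `P` a probability measure
on a Polish space `Ω₀`, `p` any stochastic (Markov) kernel from `Ω₀` to `ℝ^k`, `U ⊆ ℝ^n`
convex (and nonempty), and `c` bounded continuous, the optimal cost `J*(pτ_m)` of the
Gaussian-corrupted model converges to the optimal cost `J*(p)` of the original model. -/
theorem single_dm_main_theorem
    {Ω₀ : Type*} [MetricSpace Ω₀] [PolishSpace Ω₀] [MeasurableSpace Ω₀] [BorelSpace Ω₀]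
    (k n : ℕ) (P : Measure Ω₀) [IsProbabilityMeasure P]
    (p : Kernel Ω₀ (Fin k → ℝ)) [IsMarkovKernel p]
    (U : Set (Fin n → ℝ)) (hU_conv : Convex ℝ U) (hU_ne : U.Nonempty)
    (c : Ω₀ × (Fin n → ℝ) → ℝ) (M : ℝ) (hc_cont : Continuous c) (hc_bdd : ∀ q, |c q| ≤ M) :
    Tendsto (fun m : ℕ =>
        sInf {r : ℝ | ∃ γ : (Fin k → ℝ) → (Fin n → ℝ), Measurable γ ∧ (∀ z, γ z ∈ U) ∧
          r = ∫ ω₀, ∫ y, ∫ z, c (ω₀, γ z) ∂(gaussPi k m y) ∂(p ω₀) ∂P})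
      atTop
      (𝓝 (sInf {r : ℝ | ∃ γ : (Fin k → ℝ) → (Fin n → ℝ), Measurable γ ∧ (∀ y, γ y ∈ U) ∧
          r = ∫ ω₀, ∫ y, c (ω₀, γ y) ∂(p ω₀) ∂P})) :=
  single_dm_main_theorem_general k n P p U hU_conv hU_ne c M hc_cont hc_bdd
end

section
/- Let S, T be Polish spaces, μ_m → μ weakly on S, and let k_m, k be stochastic kernels from S to T such that whenever s_m → s in S, k_m(·|s_m) → k(·|s) weakly in P(T). Then the product measures μ_m ⊗ k_m (defined by (μ_m ⊗ k_m)(A × B) = ∫_A k_m(B|s) μ_m(ds)) converge weakly to μ ⊗ k on S × T. -/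
open MeasureTheory ProbabilityTheory Filter Topology
open scoped ENNReal

/-!
Writing `∫ g d(μₘ ⊗ kₘ) = ∫ Gₘ dμₘ` with `Gₘ s = ∫ g (s, t) dkₘ(t|s)`, both the inner and the
outer integral are instances of one principle: if `νₘ → ν` weakly and uniformly bounded `Fₘ`
converge continuously to `f` (`Fₘ xₘ → f x` whenever `xₘ → x`), then `∫ Fₘ dνₘ → ∫ f dν`.
Continuous convergence makes `f` continuous and the convergence uniform on a neighbourhood `U` of
any compact `K`. Choosing `K` with `ν Kᶜ` small (tightness), the portmanteau bound for the closed
set `Uᶜ` makes `νₘ Uᶜ` eventually small, which controls `∫ (Fₘ - f) dνₘ`, while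
`∫ f dνₘ → ∫ f dν` by weak convergence. Applied to the kernels, the principle shows that
`Gₘ → G` continuously, and applied once more to `μₘ → μ` it gives the theorem.
-/

section ContinuousConvergence

variable {X Y : Type*} [TopologicalSpace X] [TopologicalSpace Y]

theorem tendsto_extend_of_strictMono_s19 {σ : ℕ → ℕ} (hσ : StrictMono σ) {u : ℕ → X} {a : X}
    (hu : Tendsto u atTop (𝓝 a)) : Tendsto (Function.extend σ u fun _ => a) atTop (𝓝 a) := by
  intro V hV
  obtain ⟨N, hN⟩ := mem_atTop_sets.1 (hu hV)
  refine mem_map.2 ?_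
  filter_upwards [eventually_ge_atTop (σ N)] with m hm
  by_cases hmσ : ∃ i, σ i = m
  · obtain ⟨i, rfl⟩ := hmσ
    rw [Set.mem_preimage, hσ.injective.extend_apply]
    exact hN i (hσ.le_iff_le.1 hm)
  · rw [Set.mem_preimage, Function.extend_apply' _ _ _ hmσ]
    exact mem_of_mem_nhds hV

theorem tendsto_apply_strictMono_of_forall_tendsto {F : ℕ → X → Y} {f : X → Y}
    (hF : ∀ (u : ℕ → X) (x : X), Tendsto u atTop (𝓝 x) →
      Tendsto (fun m => F m (u m)) atTop (𝓝 (f x)))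
    {σ : ℕ → ℕ} (hσ : StrictMono σ) {u : ℕ → X} {a : X} (hu : Tendsto u atTop (𝓝 a)) :
    Tendsto (fun i => F (σ i) (u i)) atTop (𝓝 (f a)) := by
  simpa [Function.comp_def, hσ.injective.extend_apply] using
    (hF _ a (tendsto_extend_of_strictMono_s19 hσ hu)).comp hσ.tendsto_atTop

theorem tendsto_prod_nhds_of_forall_tendsto [FirstCountableTopology X]
    {F : ℕ → X → Y} {f : X → Y}
    (hF : ∀ (u : ℕ → X) (x : X), Tendsto u atTop (𝓝 x) →
      Tendsto (fun m => F m (u m)) atTop (𝓝 (f x)))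
    (x : X) : Tendsto (fun p : ℕ × X => F p.1 p.2) (atTop ×ˢ 𝓝 x) (𝓝 (f x)) := by
  refine tendsto_of_subseq_tendsto fun ns hns => ?_
  obtain ⟨ms, hms, hmono⟩ := strictMono_subseq_of_tendsto_atTop (tendsto_fst.comp hns)
  exact ⟨ms, tendsto_apply_strictMono_of_forall_tendsto hF hmono
    ((tendsto_snd.comp hns).comp hms.tendsto_atTop)⟩

variable {ι : Type*} {p : Filter ι} {F : ι → X → Y} {f : X → Y}

theorem tendsto_apply_of_tendsto_prod_nhds
    (hF : ∀ x, Tendsto (fun q : ι × X => F q.1 q.2) (p ×ˢ 𝓝 x) (𝓝 (f x))) (x : X) :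
    Tendsto (F · x) p (𝓝 (f x)) :=
  (hF x).comp (tendsto_id.prodMk tendsto_const_nhds)

theorem continuous_of_tendsto_prod_nhds [p.NeBot] [RegularSpace Y]
    (hF : ∀ x, Tendsto (fun q : ι × X => F q.1 q.2) (p ×ˢ 𝓝 x) (𝓝 (f x))) :
    Continuous f := by
  refine continuous_iff_continuousAt.2 fun x => (closed_nhds_basis (f x)).tendsto_right_iff.2 ?_
  rintro V ⟨hV, hV_closed⟩
  obtain ⟨P, hP, Q, hQ, hPQ⟩ := eventually_prod_iff.1 (hF x hV)
  filter_upwards [hQ] with y hy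
  exact hV_closed.mem_of_tendsto (tendsto_apply_of_tendsto_prod_nhds hF y)
    (hP.mono fun n hn => hPQ hn hy)

end ContinuousConvergence

theorem eventually_prod_nhdsSet_dist_lt {X Y ι : Type*} [TopologicalSpace X]
    [PseudoMetricSpace Y]
    {p : Filter ι} {F : ι → X → Y} {f : X → Y}
    (hF : ∀ x, Tendsto (fun q : ι × X => F q.1 q.2) (p ×ˢ 𝓝 x) (𝓝 (f x)))
    (hf : Continuous f) {K : Set X} (hK : IsCompact K) {ε : ℝ} (hε : 0 < ε) :
    ∀ᶠ q in p ×ˢ 𝓝ˢ K, dist (F q.1 q.2) (f q.2) < ε :=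
  hK.mem_prod_nhdsSet_of_forall fun x _ => by
    have h := (hF x).dist ((hf.tendsto x).comp tendsto_snd)
    rw [dist_self] at h
    exact h.eventually_lt_const hε

theorem norm_integral_le_add_measureReal_compl_mul {X E : Type*} [MeasurableSpace X]
    [NormedAddCommGroup E] [NormedSpace ℝ E] {μ : Measure X} [IsProbabilityMeasure μ]
    {g : X → E} (hg : Integrable g μ) {s : Set X} (hs : MeasurableSet s) {a b : ℝ} (ha : 0 ≤ a)
    (hgs : ∀ x ∈ s, ‖g x‖ ≤ a) (hgb : ∀ x, ‖g x‖ ≤ b) :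
    ‖∫ x, g x ∂μ‖ ≤ a + μ.real sᶜ * b :=
  calc ‖∫ x, g x ∂μ‖ ≤ ‖∫ x in s, g x ∂μ‖ + ‖∫ x, g x ∂μ - ∫ x in s, g x ∂μ‖ :=
        norm_le_norm_add_norm_sub' _ _
    _ ≤ a * μ.real s + μ.real sᶜ * b :=
        add_le_add (norm_setIntegral_le_of_norm_le_const (measure_lt_top _ _) hgs)
          (norm_integral_sub_setIntegral_le (ae_of_all _ hgb) hs hg)
    _ ≤ a + μ.real sᶜ * b := by gcongr; exact mul_le_of_le_one_right ha measureReal_le_one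

theorem eventually_measure_lt_of_forall_integral_tendsto {X : Type*} [TopologicalSpace X]
    [MeasurableSpace X] [OpensMeasurableSpace X] [HasOuterApproxClosed X]
    {ν : Measure X} [IsProbabilityMeasure ν] {νs : ℕ → Measure X}
    [∀ m, IsProbabilityMeasure (νs m)]
    (hν : ∀ g : BoundedContinuousFunction X ℝ,
      Tendsto (fun m => ∫ x, g x ∂(νs m)) atTop (𝓝 (∫ x, g x ∂ν)))
    {C : Set X} (hC : IsClosed C) {r : ℝ≥0∞} (hνC : ν C < r) : ∀ᶠ m in atTop, νs m C < r := by
  let P : ℕ → ProbabilityMeasure X := fun m => ⟨νs m, inferInstance⟩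
  have hP : Tendsto P atTop (𝓝 ⟨ν, inferInstance⟩) :=
    ProbabilityMeasure.tendsto_iff_forall_integral_tendsto.2 hν
  exact eventually_lt_of_limsup_lt
    ((ProbabilityMeasure.limsup_measure_closed_le_of_tendsto hP hC).trans_lt hνC)

section WeakConvergence

variable {X : Type*} [TopologicalSpace X] [PolishSpace X] [MeasurableSpace X] [BorelSpace X]
  {ν : Measure X} [IsProbabilityMeasure ν] {νs : ℕ → Measure X} [∀ m, IsProbabilityMeasure (νs m)]
  {F : ℕ → X → ℝ} {f : X → ℝ} {M : ℝ}

theorem eventually_norm_integral_sub_le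
    (hν : ∀ g : BoundedContinuousFunction X ℝ,
      Tendsto (fun m => ∫ x, g x ∂(νs m)) atTop (𝓝 (∫ x, g x ∂ν)))
    (hF : ∀ x, Tendsto (fun q : ℕ × X => F q.1 q.2) (atTop ×ˢ 𝓝 x) (𝓝 (f x)))
    (hf : Continuous f) (hFm : ∀ m, AEStronglyMeasurable (F m) (νs m)) (hM : 0 ≤ M)
    (hFM : ∀ m x, ‖F m x‖ ≤ M) (hfM : ∀ x, ‖f x‖ ≤ M) {η : ℝ} (hη : 0 < η) :
    ∀ᶠ m in atTop, ‖∫ x, F m x ∂(νs m) - ∫ x, f x ∂(νs m)‖ ≤ η * (1 + 2 * M) := by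
  obtain ⟨K, hK, hνK⟩ : ∃ K, IsCompact K ∧ ν Kᶜ ≤ ENNReal.ofReal (η / 2) := by
    simpa using isTightMeasureSet_iff_exists_isCompact_measure_compl_le.1
      (isTightMeasureSet_singleton (μ := ν)) _ (ENNReal.ofReal_pos.2 (half_pos hη))
  obtain ⟨P, hP, Q, hQ, hPQ⟩ :=
    eventually_prod_iff.1 (eventually_prod_nhdsSet_dist_lt hF hf hK hη)
  set U := interior {x | Q x}
  have hKU : K ⊆ U := subset_interior_iff_mem_nhdsSet.2 hQ
  have hνU : ν Uᶜ < ENNReal.ofReal η := ((measure_mono (Set.compl_subset_compl.2 hKU)).trans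
    hνK).trans_lt ((ENNReal.ofReal_lt_ofReal_iff hη).2 (half_lt_self hη))
  filter_upwards [hP, eventually_measure_lt_of_forall_integral_tendsto hν
    isOpen_interior.isClosed_compl hνU] with m hm hmU
  have hFi : Integrable (F m) (νs m) := .of_bound (hFm m) M (ae_of_all _ (hFM m))
  have hfi : Integrable f (νs m) := .of_bound hf.aestronglyMeasurable M (ae_of_all _ hfM)
  rw [← integral_sub hFi hfi]
  calc ‖∫ x, (F m x - f x) ∂(νs m)‖ ≤ η + (νs m).real Uᶜ * (2 * M) :=
        norm_integral_le_add_measureReal_compl_mul (hFi.sub hfi) isOpen_interior.measurableSet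
          hη.le (fun x hx => by simpa [dist_eq_norm] using (hPQ hm (interior_subset hx)).le)
          (fun x => (norm_sub_le _ _).trans (by linarith [hFM m x, hfM x]))
    _ ≤ η + η * (2 * M) := by
        gcongr; exact ENNReal.toReal_le_of_le_ofReal hη.le hmU.le
    _ = η * (1 + 2 * M) := by ring

theorem tendsto_integral_of_tendsto_prod_nhds
    (hν : ∀ g : BoundedContinuousFunction X ℝ,
      Tendsto (fun m => ∫ x, g x ∂(νs m)) atTop (𝓝 (∫ x, g x ∂ν)))
    (hF : ∀ x, Tendsto (fun q : ℕ × X => F q.1 q.2) (atTop ×ˢ 𝓝 x) (𝓝 (f x)))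
    (hFm : ∀ m, AEStronglyMeasurable (F m) (νs m)) (hFM : ∀ m x, ‖F m x‖ ≤ M) :
    Tendsto (fun m => ∫ x, F m x ∂(νs m)) atTop (𝓝 (∫ x, f x ∂ν)) := by
  have : Nonempty X := nonempty_of_isProbabilityMeasure ν
  have hM : 0 ≤ M := (norm_nonneg _).trans (hFM 0 (Classical.arbitrary X))
  have hf : Continuous f := continuous_of_tendsto_prod_nhds hF
  have hfM : ∀ x, ‖f x‖ ≤ M := fun x =>
    le_of_tendsto' (tendsto_apply_of_tendsto_prod_nhds hF x).norm fun m => hFM m x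
  have hdiff : Tendsto (fun m => ∫ x, F m x ∂(νs m) - ∫ x, f x ∂(νs m)) atTop (𝓝 0) := by
    refine NormedAddGroup.tendsto_nhds_zero.2 fun ε hε => ?_
    have hη : 0 < ε / (2 * (1 + 2 * M)) := by positivity
    filter_upwards [eventually_norm_integral_sub_le hν hF hf hFm hM hFM hfM hη] with m hm
    calc _ ≤ ε / (2 * (1 + 2 * M)) * (1 + 2 * M) := hm
      _ < ε := by field_simp; linarith
  simpa using hdiff.add (hν (.ofNormedAddCommGroup f hf M hfM))

end WeakConvergence

/-- Weak convergence of joint measures: if `μ_m → μ` weakly on a Polish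
space `S` and the Markov kernels `k_m` converge continuously to `k` (i.e. `k_m(·|s_m) →
k(·|s)` weakly whenever `s_m → s`), then the product measures `μ_m ⊗ k_m` converge weakly
to `μ ⊗ k` on `S × T`. -/
theorem compProd_weak_convergence
    {S : Type*} [MetricSpace S] [PolishSpace S] [MeasurableSpace S] [BorelSpace S]
    {T : Type*} [MetricSpace T] [PolishSpace T] [MeasurableSpace T] [BorelSpace T]
    (μ : Measure S) (μseq : ℕ → Measure S)
    [IsProbabilityMeasure μ] [∀ m, IsProbabilityMeasure (μseq m)]
    (hμ_weak : ∀ f : BoundedContinuousFunction S ℝ,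
      Tendsto (fun m => ∫ s, f s ∂(μseq m)) atTop (𝓝 (∫ s, f s ∂μ)))
    (κ : Kernel S T) (κseq : ℕ → Kernel S T)
    [IsMarkovKernel κ] [∀ m, IsMarkovKernel (κseq m)]
    (hκ_cc : ∀ (s : ℕ → S) (s₀ : S), Tendsto s atTop (𝓝 s₀) →
      ∀ f : BoundedContinuousFunction T ℝ,
        Tendsto (fun m => ∫ t, f t ∂(κseq m (s m))) atTop (𝓝 (∫ t, f t ∂(κ s₀)))) :
    ∀ g : BoundedContinuousFunction (S × T) ℝ,
      Tendsto (fun m => ∫ q, g q ∂((μseq m).compProd (κseq m))) atTop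
        (𝓝 (∫ q, g q ∂(μ.compProd κ))) := by
  intro g
  have hg_int : ∀ (u : ℕ → S) (s₀ : S), Tendsto u atTop (𝓝 s₀) →
      Tendsto (fun m => ∫ t, g (u m, t) ∂(κseq m (u m))) atTop (𝓝 (∫ t, g (s₀, t) ∂(κ s₀))) :=
    fun u s₀ hu => tendsto_integral_of_tendsto_prod_nhds (hκ_cc u s₀ hu)
      (fun t => g.continuous.continuousAt.tendsto.comp
        ((hu.comp tendsto_fst).prodMk_nhds tendsto_snd))
      (fun m => (g.continuous.comp (.prodMk_right (u m))).aestronglyMeasurable)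
      (fun _ _ => g.norm_coe_le_norm _)
  have h := tendsto_integral_of_tendsto_prod_nhds (M := ‖g‖) hμ_weak
    (tendsto_prod_nhds_of_forall_tendsto hg_int)
    (fun _ => g.continuous.stronglyMeasurable.integral_kernel_prod_right'.aestronglyMeasurable)
    (fun _ _ => norm_integral_le_of_norm_le_const (ae_of_all _ fun t => g.norm_coe_le_norm _)
      |>.trans_eq (by simp))
  simpa only [Measure.integral_compProd (g.integrable _)] using h
end
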